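/- arXiv:2104.05209 — 12 statements merged into one kernel-verified Lean document; each statement's English description precedes it below -/
import Mathlib

section
/- For all integers m ≥ 0 and n > m, the sum over k from 0 to m of the sum over all compositions (a_1,...,a_k) of m into k positive integer parts of (-n)^k / (k! · a_1·a_2···a_k) equals (-1)^m · C(n,m). -/
/-- Compositions of `m` into `k` positive parts. -/
def posCompositions (k m : ℕ) : Finset (Fin k → ℕ) :=
  (Finset.Nat.antidiagonalTuple k m).filter fun a => ∀ i, 0 < a i

/-!
The sum of `x ^ k / (k! ∏ aᵢ)` over all compositions `a` of `m` is the coefficient of `t ^ m` in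
`exp (x ∑_{a ≥ 1} t ^ a / a) = (1 - t) ^ (-x)`, namely the rising factorial `x (x + 1) ⋯ (x + m - 1) / m!`,
which at `x = -n` equals `(-1) ^ m C(n, m)`. Instead of power series we use the recursion that
differentiation in `t` encodes: with `U k m = ∑ₐ 1 / ∏ aᵢ`, symmetry in the parts gives
`m U (k + 1) m = (k + 1) ∑_{j < m} U k j`, so the coefficients `c m x` satisfy
`(m + 1) c (m + 1) x = x ∑_{j ≤ m} c j x`, as do the rising factorials by a hockey-stick identity.
-/

open Finset Polynomial
open scoped Nat

section Compositions

variable {k m : ℕ}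

lemma mem_posCompositions {a : Fin k → ℕ} :
    a ∈ posCompositions k m ↔ ∑ i, a i = m ∧ ∀ i, 0 < a i := by
  simp [posCompositions, Finset.Nat.mem_antidiagonalTuple]

lemma posCompositions_zero_left :
    posCompositions 0 m = if m = 0 then {![]} else ∅ := by
  ext a
  split_ifs with hm <;> simp [mem_posCompositions, Subsingleton.elim a ![], hm, eq_comm]

lemma posCompositions_eq_empty (h : m < k) : posCompositions k m = ∅ := by
  refine eq_empty_of_forall_notMem fun a ha => ?_
  obtain ⟨hsum, hpos⟩ := mem_posCompositions.1 ha
  have : ∑ _i : Fin k, 1 ≤ ∑ i, a i := sum_le_sum fun i _ => hpos i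
  simp only [sum_const, card_univ, Fintype.card_fin, smul_eq_mul, mul_one] at this
  omega

lemma comp_perm_mem_posCompositions {a : Fin k → ℕ} (σ : Equiv.Perm (Fin k))
    (ha : a ∈ posCompositions k m) : a ∘ σ ∈ posCompositions k m := by
  rw [mem_posCompositions] at ha ⊢
  exact ⟨(Equiv.sum_comp σ a).trans ha.1, fun i => ha.2 (σ i)⟩

lemma sum_posCompositions_comp_perm {M : Type*} [AddCommMonoid M] (σ : Equiv.Perm (Fin k))
    (g : (Fin k → ℕ) → M) :
    ∑ a ∈ posCompositions k m, g (a ∘ σ) = ∑ a ∈ posCompositions k m, g a :=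
  sum_nbij' (· ∘ σ) (· ∘ σ.symm) (fun _ => comp_perm_mem_posCompositions σ)
    (fun _ => comp_perm_mem_posCompositions σ.symm) (fun a _ => by ext; simp)
    (fun a _ => by ext; simp) fun _ _ => rfl

lemma cons_mem_posCompositions_succ {s : ℕ} {b : Fin k → ℕ} :
    Fin.cons s b ∈ posCompositions (k + 1) m ↔
      0 < s ∧ s ≤ m ∧ b ∈ posCompositions k (m - s) := by
  simp only [mem_posCompositions, Fin.sum_univ_succ, Fin.forall_fin_succ, Fin.cons_zero,
    Fin.cons_succ]
  constructor
  · rintro ⟨hsum, hs, hb⟩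
    exact ⟨hs, by omega, by omega, hb⟩
  · rintro ⟨hs, hsm, hsum, hb⟩
    exact ⟨by omega, hs, hb⟩

lemma sum_posCompositions_succ {M : Type*} [AddCommMonoid M] (F : ℕ → (Fin k → ℕ) → M) :
    ∑ a ∈ posCompositions (k + 1) m, F (a 0) (Fin.tail a) =
      ∑ j ∈ range m, ∑ b ∈ posCompositions k j, F (m - j) b := by
  rw [sum_sigma']
  refine sum_nbij' (fun a => ⟨m - a 0, Fin.tail a⟩) (fun p => Fin.cons (m - p.1) p.2)
    ?_ ?_ ?_ ?_ ?_
  · intro a ha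
    rw [← Fin.cons_self_tail a, cons_mem_posCompositions_succ] at ha
    simp only [mem_sigma, mem_range]
    exact ⟨by omega, ha.2.2⟩
  · rintro ⟨j, b⟩ h
    simp only [mem_sigma, mem_range] at h
    rw [cons_mem_posCompositions_succ, Nat.sub_sub_self h.1.le]
    dsimp only
    exact ⟨by omega, by omega, h.2⟩
  · intro a ha
    rw [← Fin.cons_self_tail a, cons_mem_posCompositions_succ] at ha
    simp [Nat.sub_sub_self ha.2.1]
  · rintro ⟨j, b⟩ h
    simp only [mem_sigma, mem_range] at h
    simp [Nat.sub_sub_self h.1.le]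
  · intro a ha
    rw [← Fin.cons_self_tail a, cons_mem_posCompositions_succ] at ha
    simp [Nat.sub_sub_self ha.2.1]

end Compositions

section InvProdSum

variable (K : Type*) [Field K]

noncomputable def invProdSum (k m : ℕ) : K :=
  ∑ a ∈ posCompositions k m, (∏ i, (a i : K))⁻¹

variable {K}

lemma invProdSum_zero_left (m : ℕ) : invProdSum K 0 m = if m = 0 then 1 else 0 := by
  rw [invProdSum, posCompositions_zero_left]
  split_ifs <;> simp

lemma invProdSum_eq_zero {k m : ℕ} (h : m < k) : invProdSum K k m = 0 := by
  rw [invProdSum, posCompositions_eq_empty h, sum_empty]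

lemma sum_posCompositions_head_div_prod [CharZero K] (k m : ℕ) :
    ∑ a ∈ posCompositions (k + 1) m, (a 0 : K) / ∏ i, (a i : K) =
      ∑ j ∈ range m, invProdSum K k j := by
  have head_div : ∀ a ∈ posCompositions (k + 1) m,
      (a 0 : K) / ∏ i, (a i : K) = (∏ i, (Fin.tail a i : K))⁻¹ := by
    intro a ha
    have : (a 0 : K) ≠ 0 := Nat.cast_ne_zero.2 ((mem_posCompositions.1 ha).2 0).ne'
    rw [Fin.prod_univ_succ, div_mul_cancel_left₀ this]
    rfl
  rw [sum_congr rfl head_div, sum_posCompositions_succ (fun _ b => (∏ i, (b i : K))⁻¹)]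
  rfl

/-- Write `m = ∑ᵢ aᵢ`; by symmetry each part contributes to `∑ₐ aᵢ / ∏ a` what the first one does,
and the first part cancels against its own factor in the product. -/
lemma natCast_mul_invProdSum_succ [CharZero K] (k m : ℕ) :
    (m : K) * invProdSum K (k + 1) m = (k + 1) * ∑ j ∈ range m, invProdSum K k j := by
  have part_sum : ∀ a ∈ posCompositions (k + 1) m,
      (m : K) * (∏ i, (a i : K))⁻¹ = ∑ i, (a i : K) / ∏ i, (a i : K) := by
    intro a ha
    rw [← sum_div, ← Nat.cast_sum, (mem_posCompositions.1 ha).1, div_eq_mul_inv]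
  have symm : ∀ i : Fin (k + 1), ∑ a ∈ posCompositions (k + 1) m, (a i : K) / ∏ i, (a i : K) =
      ∑ a ∈ posCompositions (k + 1) m, (a 0 : K) / ∏ i, (a i : K) := by
    intro i
    rw [← sum_posCompositions_comp_perm (Equiv.swap 0 i) fun a => (a 0 : K) / ∏ j, (a j : K)]
    refine sum_congr rfl fun a _ => ?_
    simp only [Function.comp_apply, Equiv.swap_apply_left]
    rw [Equiv.prod_comp (Equiv.swap 0 i) fun j => (a j : K)]
  rw [invProdSum, mul_sum, sum_congr rfl part_sum, sum_comm, sum_congr rfl fun i _ => symm i,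
    sum_const, card_univ, Fintype.card_fin, nsmul_eq_mul, sum_posCompositions_head_div_prod]
  push_cast
  ring

end InvProdSum

lemma ascPochhammer_succ_left_eval {R : Type*} [CommSemiring R] (m : ℕ) (x : R) :
    (ascPochhammer R (m + 1)).eval x = x * (ascPochhammer R m).eval (x + 1) := by
  simp [ascPochhammer_succ_left, eval_comp]

section CompositionSum

variable {K : Type*} [Field K]

noncomputable def compositionSum (m : ℕ) (x : K) : K :=
  ∑ k ∈ range (m + 1), x ^ k / k ! * invProdSum K k m

lemma compositionSum_eq_sum_range {m N : ℕ} (h : m < N) (x : K) :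
    compositionSum m x = ∑ k ∈ range N, x ^ k / k ! * invProdSum K k m := by
  refine sum_subset (range_subset_range.2 h) fun k _ hk => ?_
  rw [mem_range, not_lt] at hk
  rw [invProdSum_eq_zero hk, mul_zero]

lemma succ_mul_compositionSum_succ [CharZero K] (m : ℕ) (x : K) :
    (m + 1) * compositionSum (m + 1) x = x * ∑ j ∈ range (m + 1), compositionSum j x := by
  have term : ∀ k ∈ range (m + 1),
      (m + 1 : K) * (x ^ (k + 1) / (k + 1)! * invProdSum K (k + 1) (m + 1)) =
        x * ∑ j ∈ range (m + 1), x ^ k / k ! * invProdSum K k j := by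
    intro k _
    have h := natCast_mul_invProdSum_succ (K := K) k (m + 1)
    rw [← mul_sum, Nat.factorial_succ]
    have hk : (k ! : K) ≠ 0 := Nat.cast_ne_zero.2 k.factorial_ne_zero
    push_cast at h ⊢
    field_simp
    linear_combination x ^ (k + 1) * h
  rw [compositionSum, sum_range_succ', invProdSum_zero_left, if_neg m.succ_ne_zero, mul_zero,
    add_zero, mul_sum, sum_congr rfl term, ← mul_sum, sum_comm]
  congr 1
  exact sum_congr rfl fun j hj => (compositionSum_eq_sum_range (mem_range.1 hj) x).symm

lemma sum_range_ascPochhammer_eval_div_factorial [CharZero K] (m : ℕ) (x : K) :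
    ∑ j ∈ range (m + 1), (ascPochhammer K j).eval x / j ! =
      (ascPochhammer K m).eval (x + 1) / m ! := by
  induction m with
  | zero => simp
  | succ m ih =>
    rw [sum_range_succ, ih, ascPochhammer_succ_left_eval, ascPochhammer_succ_eval, Nat.factorial_succ]
    push_cast
    field_simp
    ring

theorem compositionSum_eq_ascPochhammer_eval [CharZero K] (m : ℕ) (x : K) :
    compositionSum m x = (ascPochhammer K m).eval x / m ! := by
  induction m using Nat.strong_induction_on with
  | _ m ih =>
  cases m with
  | zero => simp [compositionSum, invProdSum_zero_left]
  | succ m =>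
    have hrec := succ_mul_compositionSum_succ m x
    rw [sum_congr rfl fun j hj => ih j (by simp at hj; omega),
      sum_range_ascPochhammer_eval_div_factorial] at hrec
    rw [ascPochhammer_succ_left_eval, Nat.factorial_succ]
    push_cast
    field_simp
    linear_combination hrec

end CompositionSum

theorem stmt0_general (m n : ℕ) :
    ∑ k ∈ Finset.range (m + 1), ∑ a ∈ posCompositions k m,
      (-(n : ℝ)) ^ k / ((k.factorial : ℝ) * ∏ i, (a i : ℝ))
    = (-1 : ℝ) ^ m * (n.choose m : ℝ) := by
  have lhs : ∑ k ∈ Finset.range (m + 1), ∑ a ∈ posCompositions k m,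
      (-(n : ℝ)) ^ k / ((k.factorial : ℝ) * ∏ i, (a i : ℝ)) = compositionSum m (-(n : ℝ)) := by
    refine sum_congr rfl fun k _ => ?_
    rw [invProdSum, mul_sum]
    exact sum_congr rfl fun a _ => by rw [div_mul_eq_div_div, div_eq_mul_inv (_ / _)]
  rw [lhs, compositionSum_eq_ascPochhammer_eval, ascPochhammer_eval_neg_eq_descPochhammer,
    descPochhammer_eval_eq_descFactorial, Nat.descFactorial_eq_factorial_mul_choose]
  push_cast
  field_simp

theorem stmt0 (m n : ℕ) (hnm : m < n) :
    ∑ k ∈ Finset.range (m + 1), ∑ a ∈ posCompositions k m,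
      (-(n : ℝ)) ^ k / ((k.factorial : ℝ) * ∏ i, (a i : ℝ))
    = (-1 : ℝ) ^ m * (n.choose m : ℝ) :=
  stmt0_general m n
end

section
/- Let 1 ≤ r ≤ n and b = (b_1,...,b_r) be positive integers with b_1+...+b_r = n. Then the multinomial coefficient n!/(b_1!···b_r!) times the sum over k from r to n and over all compositions (a_1,...,a_k) of n into k positive parts of (-1)^{n-k} (n-k)! / (n! · n^{n-k} · a_1···a_k) · C(n-r,k-r) · a_1^{b_1}···a_r^{b_r} equals 1 if n = r and 0 otherwise. -/
section Eulerian

open Polynomial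

variable {R : Type*}

theorem Polynomial.coeff_prod_sum_of_natDegree_le [CommSemiring R] {ι : Type*} (s : Finset ι)
    (f : ι → R[X]) (d : ι → ℕ) (h : ∀ i ∈ s, (f i).natDegree ≤ d i) :
    (∏ i ∈ s, f i).coeff (∑ i ∈ s, d i) = ∏ i ∈ s, (f i).coeff (d i) := by
  classical
  induction s using Finset.induction_on with
  | empty => simp
  | insert a s ha ih =>
    rw [Finset.prod_insert ha, Finset.sum_insert ha, Finset.prod_insert ha,
      coeff_mul_add_eq_of_natDegree_le (h a (Finset.mem_insert_self a s)), ih]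
    · exact fun i hi => h i (Finset.mem_insert_of_mem hi)
    · refine (natDegree_prod_le _ _).trans (Finset.sum_le_sum fun i hi => ?_)
      exact h i (Finset.mem_insert_of_mem hi)

-- `X * A_b`, where `A_b` is the `b`-th Eulerian polynomial.
noncomputable def eulerianPoly [CommRing R] : ℕ → R[X]
  | 0 => X
  | b + 1 => X * (1 - X) * derivative (eulerianPoly b) + (b + 1 : R[X]) * X * eulerianPoly b

variable [CommRing R]

theorem coeff_eulerianPoly_succ_add_two (b s : ℕ) :
    (eulerianPoly (b + 1) : R[X]).coeff (s + 2) =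
      (s + 2) * (eulerianPoly b).coeff (s + 2) + (b - s) * (eulerianPoly b).coeff (s + 1) := by
  have h : (eulerianPoly (b + 1) : R[X]) = X * derivative (eulerianPoly b)
      - X ^ 2 * derivative (eulerianPoly b) + (b + 1 : R[X]) * (X * eulerianPoly b) := by
    rw [eulerianPoly]; ring
  rw [h, coeff_add, coeff_sub, coeff_X_mul, coeff_X_pow_mul, ← C_eq_natCast, ← C_1, ← C_add,
    coeff_C_mul, coeff_X_mul, coeff_derivative, coeff_derivative]
  push_cast
  ring

theorem coeff_eulerianPoly_eq_zero {b N : ℕ} (hN : b + 1 < N) :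
    (eulerianPoly b : R[X]).coeff N = 0 := by
  induction b generalizing N with
  | zero => rw [eulerianPoly, coeff_X, if_neg (by omega)]
  | succ b ih =>
    obtain ⟨s, rfl⟩ : ∃ s, N = s + 2 := ⟨N - 2, by omega⟩
    rw [coeff_eulerianPoly_succ_add_two, ih (by omega), ih (by omega), mul_zero, mul_zero, add_zero]

theorem natDegree_eulerianPoly_le (b : ℕ) : (eulerianPoly b : R[X]).natDegree ≤ b + 1 :=
  natDegree_le_iff_coeff_eq_zero.mpr fun _ hN => coeff_eulerianPoly_eq_zero hN

theorem coeff_eulerianPoly_succ (b : ℕ) :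
    (eulerianPoly b : R[X]).coeff (b + 1) = if b = 0 then 1 else 0 := by
  cases b with
  | zero => simp [eulerianPoly]
  | succ b =>
    rw [coeff_eulerianPoly_succ_add_two, coeff_eulerianPoly_eq_zero (by omega), sub_self]
    simp

end Eulerian

open Finset PowerSeries
open scoped Polynomial

theorem sum_posCompositions_prod_coeff {R : Type*} [CommSemiring R] {k : ℕ} (m : ℕ)
    (φ : Fin k → R⟦X⟧) (hφ : ∀ i, constantCoeff (φ i) = 0) :
    ∑ a ∈ posCompositions k m, ∏ i, coeff (a i) (φ i) = coeff m (∏ i, φ i) := by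
  classical
  rw [coeff_prod, finsuppAntidiag, sum_map]
  erw [sum_attach (piAntidiag univ m) (fun a => ∏ i, coeff (a i) (φ i))]
  rw [piAntidiag_univ_fin_eq_antidiagonalTuple, posCompositions, sum_filter_of_ne]
  intro a _ ha i
  refine Nat.pos_of_ne_zero fun hai => ha (prod_eq_zero (mem_univ i) ?_)
  rw [hai, coeff_zero_eq_constantCoeff_apply, hφ]

variable {K : Type*} [Field K]

-- `Φ_c = ∑_{m ≥ 1} m^(c-1) X^m`, the polylogarithm `Li_{1-c}(X)`; the `m = 0` term vanishes since
-- `0 / 0 = 0`. In particular `polylogSeries K 0 = -log (1 - X)`.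
variable (K) in
noncomputable def polylogSeries (c : ℕ) : K⟦X⟧ :=
  mk fun m => (m : K) ^ c / m

@[simp]
theorem coeff_polylogSeries (c m : ℕ) : coeff m (polylogSeries K c) = (m : K) ^ c / m :=
  coeff_mk _ _

@[simp]
theorem constantCoeff_polylogSeries (c : ℕ) : constantCoeff (polylogSeries K c) = 0 := by
  simp [← coeff_zero_eq_constantCoeff_apply]

theorem X_dvd_polylogSeries (c : ℕ) : X ∣ polylogSeries K c :=
  X_dvd_iff.mpr (constantCoeff_polylogSeries c)

theorem coeff_X_mul_derivative {R : Type*} [CommSemiring R] (f : R⟦X⟧) (t : ℕ) :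
    coeff t (X * d⁄dX R f) = t * coeff t f := by
  cases t with
  | zero => simp
  | succ s => rw [coeff_succ_X_mul, coeff_derivative]; push_cast; ring

theorem coeff_one_sub_X_mul_derivative {R : Type*} [CommRing R] (f : R⟦X⟧) (t : ℕ) :
    coeff t ((1 - X) * d⁄dX R f) = (t + 1) * coeff (t + 1) f - t * coeff t f := by
  rw [sub_mul, one_mul, map_sub, coeff_X_mul_derivative, coeff_derivative]
  ring

theorem polylogSeries_succ (c : ℕ) :
    polylogSeries K (c + 1) = X * d⁄dX K (polylogSeries K c) := by
  ext t
  rw [coeff_X_mul_derivative, coeff_polylogSeries, coeff_polylogSeries]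
  ring

theorem one_sub_X_mul_derivative_polylogSeries_zero [CharZero K] :
    (1 - X) * d⁄dX K (polylogSeries K 0) = 1 := by
  ext t
  rw [coeff_one_sub_X_mul_derivative, coeff_polylogSeries, coeff_polylogSeries, coeff_one]
  rcases eq_or_ne t 0 with rfl | ht
  · simp
  · have ht' : (t : K) ≠ 0 := Nat.cast_ne_zero.mpr ht
    have ht1 : (t + 1 : K) ≠ 0 := Nat.cast_add_one_ne_zero t
    push_cast
    rw [if_neg ht, pow_zero, pow_zero, mul_one_div_cancel ht1, mul_one_div_cancel ht', sub_self]

theorem one_sub_X_pow_mul_polylogSeries [CharZero K] (b : ℕ) :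
    (1 - X) ^ (b + 1) * polylogSeries K (b + 1) = ((eulerianPoly b : K[X]) : K⟦X⟧) := by
  induction b with
  | zero =>
    rw [zero_add, pow_one, polylogSeries_succ, mul_left_comm,
      one_sub_X_mul_derivative_polylogSeries_zero, mul_one, eulerianPoly, Polynomial.coe_X]
  | succ b ih =>
    have hD := congrArg (d⁄dX K) ih
    rw [Derivation.leibniz, Derivation.leibniz_pow, map_sub, Derivation.map_one_eq_zero,
      derivative_X, derivative_coe, add_tsub_cancel_right] at hD
    simp only [smul_eq_mul, nsmul_eq_mul] at hD
    have hb : ((b : K[X]) : K⟦X⟧) = b := map_natCast Polynomial.coeToPowerSeries.ringHom b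
    rw [polylogSeries_succ, eulerianPoly]
    push_cast [hb] at hD ⊢
    linear_combination X * (1 - X) * hD + ((b + 1 : K⟦X⟧) * X) * ih

theorem X_pow_succ_dvd_of_one_sub_X_mul_derivative [CharZero K] {w : K⟦X⟧} (c : K) {m : ℕ}
    (h0 : constantCoeff w = 0) (hw : X ^ m ∣ (1 - X) * d⁄dX K w - C c * w) :
    X ^ (m + 1) ∣ w := by
  rw [X_pow_dvd_iff] at hw ⊢
  intro t ht
  induction t with
  | zero => rwa [coeff_zero_eq_constantCoeff_apply]
  | succ t ih =>
    have h := hw t (by omega)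
    rw [map_sub, coeff_one_sub_X_mul_derivative, coeff_C_mul, ih (by omega)] at h
    simpa [Nat.cast_add_one_ne_zero t] using h

-- The partial sum of degree `m` in `L = -log (1 - X)` of `exp (-n L) = (1 - X) ^ n`.
variable (K) in
noncomputable def expLogTrunc (n m : ℕ) : K⟦X⟧ :=
  ∑ j ∈ range (m + 1), C ((-n : K) ^ j / j.factorial) * polylogSeries K 0 ^ j

-- Both `(1 - X) ^ n` and its truncation solve `(1 - X) f' = -n f`, the latter up to the error
-- `n (-n) ^ m / m! * L ^ m`, which is divisible by `X ^ m`.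
theorem X_pow_succ_dvd_one_sub_X_pow_sub_expLogTrunc [CharZero K] (n m : ℕ) :
    X ^ (m + 1) ∣ (1 - X) ^ n - expLogTrunc K n m := by
  set L := polylogSeries K 0
  set c : ℕ → K := fun j => (-n : K) ^ j / j.factorial with hc
  change X ^ (m + 1) ∣ (1 - X) ^ n - ∑ j ∈ range (m + 1), C (c j) * L ^ j
  have hu : (1 - X) * d⁄dX K ((1 - X) ^ n) = C (-n : K) * (1 - X) ^ n := by
    rw [derivative_pow, map_sub, derivative_one, derivative_X, map_neg, map_natCast]
    rcases n with _ | n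
    · simp
    · rw [add_tsub_cancel_right, pow_succ]
      push_cast
      ring
  have hc_succ : ∀ j, c (j + 1) * (j + 1) = -n * c j := by
    intro j
    simp only [hc, Nat.factorial_succ, pow_succ]
    push_cast
    field_simp
  have hterm : ∀ j, (1 - X) * d⁄dX K (C (c j) * L ^ j) = C (c j) * (j : K⟦X⟧) * L ^ (j - 1) := by
    intro j
    rw [Derivation.leibniz, derivative_C, smul_zero, add_zero, smul_eq_mul, derivative_pow]
    linear_combination (C (c j) * (j : K⟦X⟧) * L ^ (j - 1)) *
      one_sub_X_mul_derivative_polylogSeries_zero (K := K)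
  have hv : (1 - X) * d⁄dX K (∑ j ∈ range (m + 1), C (c j) * L ^ j) =
      C (-n : K) * ∑ j ∈ range (m + 1), C (c j) * L ^ j - C (-n : K) * (C (c m) * L ^ m) := by
    rw [map_sum, mul_sum, sum_congr rfl fun j _ => hterm j, sum_range_succ', sum_range_succ,
      mul_add, add_sub_cancel_right, mul_sum]
    simp only [Nat.cast_zero, mul_zero, zero_mul, add_zero, add_tsub_cancel_right]
    refine sum_congr rfl fun j _ => ?_
    rw [← map_natCast (C (R := K)), ← map_mul, Nat.cast_succ, hc_succ, map_mul, mul_assoc]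
  apply X_pow_succ_dvd_of_one_sub_X_mul_derivative (-n : K)
  · simp [map_sum, sum_range_succ', L, hc]
  · rw [mul_sub, map_sub, mul_sub, hu, hv]
    convert ((pow_dvd_pow_of_dvd (X_dvd_polylogSeries 0) m).mul_left (C (c m))).mul_left
      (C (-n : K)) using 1
    ring

theorem sum_posCompositions_prod_pow_div_prod {r k : ℕ} (h : r ≤ k) (b : Fin r → ℕ) (n : ℕ) :
    ∑ a ∈ posCompositions k n, (∏ i, (a (Fin.castLE h i) : K) ^ b i) / ∏ i, (a i : K) =
      coeff n ((∏ i, polylogSeries K (b i)) * polylogSeries K 0 ^ (k - r)) := by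
  obtain ⟨j, rfl⟩ := Nat.exists_eq_add_of_le h
  set e : Fin (r + j) → ℕ := Fin.append b fun _ => 0
  have hprod : (∏ i, polylogSeries K (b i)) * polylogSeries K 0 ^ j =
      ∏ i, polylogSeries K (e i) := by
    simp [e, Fin.prod_univ_add]
  rw [add_tsub_cancel_left, hprod, ← sum_posCompositions_prod_coeff _ _
    fun i => constantCoeff_polylogSeries (e i)]
  refine sum_congr rfl fun a _ => ?_
  simp only [coeff_polylogSeries, prod_div_distrib, Fin.prod_univ_add, e, Fin.append_left,
    Fin.append_right, pow_zero, prod_const_one, mul_one]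
  rfl

theorem neg_one_pow_mul_factorial_mul_choose_div [CharZero K] {n : ℕ} (hn : n ≠ 0) {j m : ℕ}
    (hj : j ≤ m) :
    (-1 : K) ^ (m - j) * (m - j).factorial * m.choose j / (n : K) ^ (m - j) =
      m.factorial * (-1 / n : K) ^ m * ((-n : K) ^ j / j.factorial) := by
  obtain ⟨d, rfl⟩ := Nat.exists_eq_add_of_le hj
  rw [add_tsub_cancel_left, Nat.cast_choose K hj, add_tsub_cancel_left]
  have hn' : (n : K) ≠ 0 := Nat.cast_ne_zero.mpr hn
  have hpow : (-1 / n : K) ^ (j + d) * (-n) ^ j = (-1) ^ d / n ^ d := by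
    have : (-1 / n : K) * (-n) = 1 := by field_simp
    calc (-1 / n : K) ^ (j + d) * (-n) ^ j = ((-1 / n) * (-n)) ^ j * (-1 / n) ^ d := by
          rw [mul_pow, pow_add]; ring
      _ = (-1) ^ d / n ^ d := by rw [this, one_pow, one_mul, div_pow]
  have hfact : ∀ k : ℕ, (k.factorial : K) ≠ 0 := fun k => Nat.cast_ne_zero.mpr k.factorial_ne_zero
  calc (-1 : K) ^ d * d.factorial * ((j + d).factorial / (j.factorial * d.factorial)) / n ^ d
      = (j + d).factorial / j.factorial * ((-1) ^ d / n ^ d) := by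
        field_simp [hfact d]
    _ = _ := by rw [← hpow]; ring

theorem coeff_prod_polylogSeries_mul_one_sub_X_pow [CharZero K] {ι : Type*} [Fintype ι]
    (b : ι → ℕ) (hb : ∀ i, 0 < b i) :
    coeff (∑ i, b i) ((∏ i, polylogSeries K (b i)) * (1 - X) ^ ∑ i, b i) =
      if ∀ i, b i = 1 then 1 else 0 := by
  have hb' : ∀ i, b i - 1 + 1 = b i := fun i => Nat.sub_add_cancel (hb i)
  have hfactor : ∀ i, polylogSeries K (b i) * (1 - X) ^ b i =
      Polynomial.coeToPowerSeries.ringHom (eulerianPoly (b i - 1)) := fun i => by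
    rw [Polynomial.coeToPowerSeries.ringHom_apply, ← one_sub_X_pow_mul_polylogSeries, hb', mul_comm]
  rw [← prod_pow_eq_pow_sum, ← prod_mul_distrib, prod_congr rfl fun i _ => hfactor i, ← map_prod,
    Polynomial.coeToPowerSeries.ringHom_apply, Polynomial.coeff_coe,
    Polynomial.coeff_prod_sum_of_natDegree_le _ _ _ fun i _ => hb' i ▸ natDegree_eulerianPoly_le _,
    ← Fintype.prod_boole]
  refine prod_congr rfl fun i _ => ?_
  obtain ⟨c, hc⟩ := Nat.exists_eq_add_one_of_ne_zero (hb i).ne'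
  rw [hc, add_tsub_cancel_right, coeff_eulerianPoly_succ]
  simp

theorem sum_eq_card_iff_forall_eq_one {ι : Type*} [Fintype ι] {b : ι → ℕ} (hb : ∀ i, 0 < b i) :
    ∑ i, b i = Fintype.card ι ↔ ∀ i, b i = 1 := by
  rw [Fintype.card_eq_sum_ones, eq_comm, sum_eq_sum_iff_of_le fun i _ => hb i]
  simp [eq_comm]

theorem sum_Icc_coeff_mul_pow_eq_coeff_mul_expLogTrunc [CharZero K] {n r : ℕ} (hn : n ≠ 0)
    (hrn : r ≤ n) (P : K⟦X⟧) :
    ∑ k ∈ Icc r n, (-1 : K) ^ (n - k) * (n - k).factorial * (n - r).choose (k - r) / n ^ (n - k) *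
        coeff n (P * polylogSeries K 0 ^ (k - r)) =
      (n - r).factorial * (-1 / n : K) ^ (n - r) * coeff n (P * expLogTrunc K n (n - r)) := by
  obtain ⟨m, rfl⟩ := Nat.exists_eq_add_of_le hrn
  rw [← Ico_add_one_right_eq_Icc, sum_Ico_eq_sum_range, show r + m + 1 - r = m + 1 by omega,
    add_tsub_cancel_left, expLogTrunc, mul_sum, map_sum, mul_sum]
  refine sum_congr rfl fun j hj => ?_
  have hjm : j ≤ m := Nat.lt_succ_iff.mp (mem_range.mp hj)
  rw [add_tsub_cancel_left, Nat.add_sub_add_left, neg_one_pow_mul_factorial_mul_choose_div hn hjm,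
    mul_left_comm, coeff_C_mul]
  ring

theorem coeff_mul_expLogTrunc [CharZero K] {n r : ℕ} (hrn : r ≤ n) {P : K⟦X⟧} (hP : X ^ r ∣ P) :
    coeff n (P * expLogTrunc K n (n - r)) = coeff n (P * (1 - X) ^ n) := by
  have hdvd : X ^ (n + 1) ∣ P * ((1 - X) ^ n - expLogTrunc K n (n - r)) := by
    rw [show n + 1 = r + (n - r + 1) by omega, pow_add]
    exact mul_dvd_mul hP (X_pow_succ_dvd_one_sub_X_pow_sub_expLogTrunc n (n - r))
  have := X_pow_dvd_iff.mp hdvd n n.lt_succ_self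
  rwa [mul_sub, map_sub, sub_eq_zero, eq_comm] at this

theorem stmt5 (n r : ℕ) (hr : 1 ≤ r) (hrn : r ≤ n) (b : Fin r → ℕ) (hb : ∀ i, 0 < b i)
    (hsum : ∑ i, b i = n) :
    ((n.factorial : ℝ) / ∏ i, ((b i).factorial : ℝ)) *
      ∑ k ∈ (Finset.Icc r n).attach,
        ∑ a ∈ posCompositions (k : ℕ) n,
          (-1 : ℝ) ^ (n - (k : ℕ)) * ((n - (k : ℕ)).factorial : ℝ) /
              ((n.factorial : ℝ) * (n : ℝ) ^ (n - (k : ℕ)) * ∏ i, (a i : ℝ)) *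
            ((n - r).choose ((k : ℕ) - r) : ℝ) *
            ∏ j : Fin r, (a (Fin.castLE (Finset.mem_Icc.mp k.2).1 j) : ℝ) ^ (b j)
    = if n = r then 1 else 0 := by
  set P := ∏ i, polylogSeries ℝ (b i)
  have hP : X ^ r ∣ P := by
    simpa using prod_dvd_prod_of_dvd (s := univ) _ _ fun i _ => X_dvd_polylogSeries (K := ℝ) (b i)
  have hnr : n = r ↔ ∀ i, b i = 1 := by
    rw [← sum_eq_card_iff_forall_eq_one hb, hsum, Fintype.card_fin]
  have hcomp : ∀ k (hk : r ≤ k), ∑ a ∈ posCompositions k n,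
      (-1 : ℝ) ^ (n - k) * ((n - k).factorial : ℝ) / ((n.factorial : ℝ) * (n : ℝ) ^ (n - k) *
        ∏ i, (a i : ℝ)) * ((n - r).choose (k - r) : ℝ) * ∏ j, (a (Fin.castLE hk j) : ℝ) ^ b j =
      (-1 : ℝ) ^ (n - k) * (n - k).factorial * (n - r).choose (k - r) / n ^ (n - k) *
        coeff n (P * polylogSeries ℝ 0 ^ (k - r)) / n.factorial := by
    intro k hk
    rw [← sum_posCompositions_prod_pow_div_prod hk, mul_sum, sum_div]
    exact sum_congr rfl fun a _ => by ring
  have hcoeff := coeff_prod_polylogSeries_mul_one_sub_X_pow (K := ℝ) b hb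
  simp only [hsum, ← hnr] at hcoeff
  calc _ = ((n.factorial : ℝ) / ∏ i, ((b i).factorial : ℝ)) * ((n - r).factorial *
        (-1 / n : ℝ) ^ (n - r) * coeff n (P * expLogTrunc ℝ n (n - r)) / n.factorial) := by
        rw [← sum_Icc_coeff_mul_pow_eq_coeff_mul_expLogTrunc (by omega) hrn, sum_div,
          ← sum_attach (Icc r n)]
        exact congrArg _ (sum_congr rfl fun k _ => hcomp k (mem_Icc.mp k.2).1)
    _ = if n = r then 1 else 0 := by
        rw [coeff_mul_expLogTrunc hrn hP, hcoeff]
        split_ifs with h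
        · subst h
          simp [hnr.mp rfl, Nat.factorial_ne_zero]
        · rw [mul_zero, zero_div, mul_zero]
end

section
/- For any x ∈ ℝ^n, the product x_1 x_2 ··· x_n equals Σ_{α ∈ B(n,n)} (-1)^{n - ‖α‖₀} · (n - ‖α‖₀)! / (n! · n^{n-‖α‖₀} · Π_{α_i ≠ 0} α_i) · ⟨α, x⟩^n, where B(n,n) is the set of all vectors α ∈ ℕ^n with α_1 + ... + α_n = n and ‖α‖₀ is the number of nonzero entries of α. -/
/-!
For `α` in the grid `B(d) = {γ ∈ ℕⁿ | Σ γᵢ = d}` let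
`G_α(t) = ∏ᵢ ∏_{r < αᵢ} (d tᵢ - r Σⱼ tⱼ)`, a form of degree `d`. At a grid point `γ` the factor
`(i, r)` equals `d (γᵢ - r)`, so `G_α(γ) = d^d ∏ αᵢ!` if `γ = α` and `0` otherwise. Since `B(d)`
also indexes the monomials of degree `d`, a dimension count shows that the normalised `G_α` are
the Lagrange basis of the forms of degree `d` for the nodes `B(d)`. Interpolating `⟨t, x⟩ⁿ` at
the nodes `B(n)` and comparing the coefficients of `t₁ ⋯ tₙ` gives the identity, the coefficient
on the left being `n! x₁ ⋯ xₙ`.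

In `G_α` the factors with `r = 0` contribute `n^k ∏_{αᵢ ≠ 0} tᵢ`, where `k = ‖α‖₀`. What is left
has to be read off at the monomial `∏_{αᵢ = 0} tᵢ`, which does not involve the variables `tᵢ`
with `αᵢ ≠ 0`; setting those to zero turns it into `(-1)^{n-k} ∏ (αᵢ - 1)! (Σ_{αⱼ = 0} tⱼ)^{n-k}`.
-/

open Finset MvPolynomial

section Combinatorics

theorem Finset.prod_range_eq_ite_mul_prod_range_pred {M : Type*} [CommMonoid M] (f : ℕ → M)
    (a : ℕ) :
    ∏ r ∈ range a, f r = (if a ≠ 0 then f 0 else 1) * ∏ r ∈ range (a - 1), f (r + 1) := by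
  cases a with
  | zero => simp
  | succ a => rw [prod_range_succ', mul_comm]; simp

theorem Finset.prod_range_neg_add_one {R : Type*} [CommRing R] (m : ℕ) :
    ∏ r ∈ range m, (-((r : R) + 1)) = (-1) ^ m * m.factorial := by
  simp_rw [neg_eq_neg_one_mul (_ + 1 : R), prod_mul_distrib, prod_const, card_range]
  rw [← prod_range_add_one_eq_factorial]
  push_cast
  rfl

theorem Finsupp.sum_single_one_apply {σ : Type*} [DecidableEq σ] (T : Finset σ) (i : σ) :
    (∑ j ∈ T, Finsupp.single j 1 : σ →₀ ℕ) i = if i ∈ T then 1 else 0 := by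
  simp [Finsupp.finsetSum_apply, Finsupp.single_apply]

variable {σ : Type*} [Fintype σ]

theorem Finset.sum_sub_one_eq_sum_sub_card (α : σ → ℕ) :
    ∑ i, (α i - 1) = ∑ i, α i - #{i | α i ≠ 0} := by
  refine Nat.eq_sub_of_add_eq ?_
  rw [card_filter, ← sum_add_distrib]
  exact sum_congr rfl fun i _ => by split_ifs <;> omega

theorem Finset.prod_factorial_eq_prod_mul_prod_factorial_sub_one {R : Type*} [CommSemiring R]
    (α : σ → ℕ) :
    ∏ i, ((α i).factorial : R)
      = (∏ i ∈ {i | α i ≠ 0}, (α i : R)) * ∏ i, ((α i - 1).factorial : R) := by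
  rw [prod_filter, ← prod_mul_distrib]
  refine prod_congr rfl fun i _ => ?_
  split_ifs with h
  · rw [← Nat.cast_mul, Nat.mul_factorial_pred h]
  · simp [not_not.mp h]

end Combinatorics

namespace MvPolynomial

section Interpolation

theorem eq_sum_eval_smul_of_eval_eq_ite {σ ι K : Type*} [Field K] [DecidableEq ι]
    {s : Finset (σ →₀ ℕ)} {I : Finset ι} (hcard : #I = #s) (pt : ι → σ → K)
    (L : ι → MvPolynomial σ K) (hL : ∀ a ∈ I, L a ∈ restrictSupport K (s : Set (σ →₀ ℕ)))
    (hLpt : ∀ a ∈ I, ∀ b ∈ I, eval (pt b) (L a) = if a = b then 1 else 0)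
    {p : MvPolynomial σ K} (hp : p ∈ restrictSupport K (s : Set (σ →₀ ℕ))) :
    p = ∑ a ∈ I, eval (pt a) p • L a := by
  set W := restrictSupport K (s : Set (σ →₀ ℕ))
  have : FiniteDimensional K W := .of_basis (basisRestrictSupport K _)
  have hW : Module.finrank K W = #s := by
    rw [Module.finrank_eq_nat_card_basis (basisRestrictSupport K _), Nat.card_coe_set_eq,
      Set.ncard_coe_finset]
  have hmem (c : ι → K) : ∑ a ∈ I, c a • L a ∈ W :=
    W.sum_mem fun a ha => W.smul_mem _ (hL a ha)
  have heval (c : ι → K) (b : ι) (hb : b ∈ I) : eval (pt b) (∑ a ∈ I, c a • L a) = c b := by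
    simp only [map_sum, smul_eval,
      sum_congr rfl fun a ha => congrArg (c a * ·) (hLpt a ha b hb)]
    simp [hb]
  let ev : W →ₗ[K] I → K := LinearMap.pi fun b => (aeval (pt b)).toLinearMap ∘ₗ W.subtype
  have hev (q : W) (b : I) : ev q b = eval (pt b) q := by simp [ev]
  have hsurj : Function.Surjective ev := fun f => by
    classical
    refine ⟨⟨_, hmem fun a => if h : a ∈ I then f ⟨a, h⟩ else 0⟩, _root_.funext fun b => ?_⟩
    rw [hev, heval _ b b.2, dif_pos b.2]
  have hinj : Function.Injective ev :=
    (LinearMap.injective_iff_surjective_of_finrank_eq_finrank (by simp [hW, hcard])).mpr hsurj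
  exact congrArg Subtype.val <| @hinj ⟨p, hp⟩ ⟨_, hmem fun a => eval (pt a) p⟩
    (_root_.funext fun b => by rw [hev, hev, heval _ b b.2])

theorem IsHomogeneous.mem_restrictSupport_antidiagonalTuple {R : Type*} [CommSemiring R]
    {k d : ℕ} {p : MvPolynomial (Fin k) R} (hp : p.IsHomogeneous d) :
    p ∈ restrictSupport R
      ((Nat.antidiagonalTuple k d).map Finsupp.equivFunOnFinite.symm.toEmbedding :
        Set (Fin k →₀ ℕ)) := by
  intro m hm
  have hdeg : ∑ i, m i = d := by
    rw [← Finsupp.degree_eq_sum, Finsupp.degree_apply]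
    exact (hp.degree_eq_sum_deg_support hm).symm
  simp only [coe_map, Set.mem_image, mem_coe, Nat.mem_antidiagonalTuple]
  exact ⟨m, hdeg, by simp⟩

end Interpolation

variable {σ R : Type*} [CommRing R]

theorem coeff_sum_single_one_pow_card [Fintype σ] [DecidableEq σ] (T : Finset σ) (a : σ → R) :
    coeff (∑ j ∈ T, Finsupp.single j 1) ((∑ i, a i • X i : MvPolynomial σ R) ^ #T)
      = (#T).factorial * ∏ i ∈ T, a i := by
  have hsum : ∑ i, (∑ j ∈ T, Finsupp.single j 1 : σ →₀ ℕ) i = #T := by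
    simp [Finsupp.sum_single_one_apply]
  rw [coeff_linearCombination_X_pow_of_fintype, Finsupp.sum_fintype _ _ (by simp), hsum,
    if_pos rfl, Finsupp.multinomial_eq_of_support_subset (subset_univ _), Nat.multinomial,
    hsum, Finsupp.prod_fintype _ _ (by simp)]
  simp [Finsupp.sum_single_one_apply, apply_ite Nat.factorial]

theorem coeff_aeval_ite_mem_zero_X [DecidableEq σ] {S : Finset σ} {m : σ →₀ ℕ}
    (hm : ∀ i ∈ S, m i = 0) (p : MvPolynomial σ R) :
    coeff m (aeval (fun j => if j ∈ S then 0 else X j) p) = coeff m p := by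
  induction p using MvPolynomial.induction_on' with
  | monomial u c =>
    by_cases h : ∀ i ∈ S, u i = 0
    · rw [aeval_monomial, Finsupp.prod_congr (g2 := fun j k => X j ^ k) fun j hj => by
        rw [if_neg fun hjS => Finsupp.mem_support_iff.mp hj (h j hjS)], ← aeval_monomial,
        aeval_X_left_apply]
    · obtain ⟨i, hiS, hi⟩ : ∃ i ∈ S, u i ≠ 0 := by simpa using h
      rw [aeval_monomial, Finsupp.prod, prod_eq_zero (Finsupp.mem_support_iff.mpr hi)
        (by simp [hiS, hi]), mul_zero, coeff_zero, coeff_monomial, if_neg]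
      rintro rfl
      exact hi (hm i hiS)
  | add p q hp hq => simp only [map_add, coeff_add, hp, hq]

section GridPoly

variable [Fintype σ]

noncomputable def gridPoly (d : ℕ) (α : σ → ℕ) : MvPolynomial σ R :=
  ∏ i, ∏ r ∈ range (α i), (C (d : R) * X i - C (r : R) * ∑ j, X j)

theorem isHomogeneous_gridPoly (d : ℕ) (α : σ → ℕ) :
    (gridPoly d α : MvPolynomial σ R).IsHomogeneous (∑ i, α i) := by
  have hsum : (∑ j, X j : MvPolynomial σ R).IsHomogeneous 1 :=
    IsHomogeneous.sum _ _ _ fun j _ => isHomogeneous_X R j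
  refine IsHomogeneous.prod _ _ _ fun i _ => ?_
  simpa using IsHomogeneous.prod (range (α i)) _ (fun _ => 1) fun (r : ℕ) _ =>
    (isHomogeneous_C_mul_X (d : R) i).sub (hsum.C_mul (r : R))

theorem eval_gridPoly (d : ℕ) (α : σ → ℕ) {γ : σ → ℕ} (hγ : ∑ i, γ i = d) :
    eval (fun i => (γ i : R)) (gridPoly d α)
      = (d : R) ^ (∑ i, α i) * ∏ i, ((γ i).descFactorial (α i) : R) := by
  have hγ' : ∑ j, (γ j : R) = d := by rw [← Nat.cast_sum, hγ]
  have hfactor (i : σ) (r : ℕ) :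
      eval (fun i => (γ i : R)) (C (d : R) * X i - C (r : R) * ∑ j, X j) = d * (γ i - r) := by
    simp only [map_sub, map_mul, eval_C, eval_X, map_sum, hγ']
    ring
  simp only [gridPoly, map_prod, hfactor, prod_mul_distrib, prod_const, card_range,
    ← descPochhammer_eval_eq_prod_range, descPochhammer_eval_eq_descFactorial,
    prod_pow_eq_pow_sum]

theorem eval_gridPoly_of_sum_eq {d : ℕ} {α γ : σ → ℕ} (hα : ∑ i, α i = d)
    (hγ : ∑ i, γ i = d) :
    eval (fun i => (γ i : R)) (gridPoly d α)
      = if α = γ then (d : R) ^ d * ∏ i, ((α i).factorial : R) else 0 := by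
  rw [eval_gridPoly d α hγ, hα]
  split_ifs with h
  · simp [h, Nat.descFactorial_self]
  · obtain ⟨i, hi⟩ : ∃ i, γ i < α i := by
      by_contra! hle
      refine h (_root_.funext fun i => ?_)
      exact (sum_eq_sum_iff_of_le fun i _ => hle i).mp (hα.trans hγ.symm) i (mem_univ i)
    rw [prod_eq_zero (mem_univ i) (by simp [Nat.descFactorial_eq_zero_iff_lt.mpr hi]), mul_zero]

theorem IsHomogeneous.eq_sum_gridPoly {K : Type*} [Field K] [CharZero K] {k d : ℕ}
    {p : MvPolynomial (Fin k) K} (hp : p.IsHomogeneous d) :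
    p = ∑ γ ∈ Nat.antidiagonalTuple k d,
      (eval (fun i => (γ i : K)) p / ((d : K) ^ d * ∏ i, ((γ i).factorial : K))) •
        gridPoly d γ := by
  have hw (γ : Fin k → ℕ) : (d : K) ^ d * ∏ i, ((γ i).factorial : K) ≠ 0 := by
    have : 0 < d ^ d * ∏ i, (γ i).factorial := Nat.mul_pos Nat.pow_self_pos (by positivity)
    exact_mod_cast this.ne'
  have hL : ∀ γ ∈ Nat.antidiagonalTuple k d,
      ((d : K) ^ d * ∏ i, ((γ i).factorial : K))⁻¹ • gridPoly d γ ∈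
        restrictSupport K ((Nat.antidiagonalTuple k d).map
          Finsupp.equivFunOnFinite.symm.toEmbedding : Set (Fin k →₀ ℕ)) := by
    intro γ hγ
    rw [smul_eq_C_mul]
    refine IsHomogeneous.mem_restrictSupport_antidiagonalTuple (IsHomogeneous.C_mul ?_ _)
    simpa [Nat.mem_antidiagonalTuple.mp hγ] using isHomogeneous_gridPoly (R := K) d γ
  have hLpt : ∀ α ∈ Nat.antidiagonalTuple k d, ∀ γ ∈ Nat.antidiagonalTuple k d,
      eval (fun i => (γ i : K)) (((d : K) ^ d * ∏ i, ((α i).factorial : K))⁻¹ • gridPoly d α)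
        = if α = γ then 1 else 0 := by
    intro α hα γ hγ
    rw [smul_eval, eval_gridPoly_of_sum_eq (Nat.mem_antidiagonalTuple.mp hα)
      (Nat.mem_antidiagonalTuple.mp hγ)]
    split_ifs
    · exact inv_mul_cancel₀ (hw α)
    · exact mul_zero _
  refine (eq_sum_eval_smul_of_eval_eq_ite (card_map _).symm _ _ hL hLpt
    hp.mem_restrictSupport_antidiagonalTuple).trans (sum_congr rfl fun γ _ => ?_)
  rw [smul_smul, div_eq_mul_inv]

theorem coeff_gridPoly [DecidableEq σ] (d : ℕ) {α : σ → ℕ} (hα : ∑ i, α i = Fintype.card σ) :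
    coeff (∑ i, Finsupp.single i 1) (gridPoly d α : MvPolynomial σ R)
      = (d : R) ^ #{i | α i ≠ 0} * ((-1) ^ (Fintype.card σ - #{i | α i ≠ 0}) *
          (Fintype.card σ - #{i | α i ≠ 0}).factorial * ∏ i, ((α i - 1).factorial : R)) := by
  set S : Finset σ := {i | α i ≠ 0}
  have hScompl : #Sᶜ = Fintype.card σ - #S := card_compl S
  set P : MvPolynomial σ R :=
    ∏ i, ∏ r ∈ range (α i - 1), (C (d : R) * X i - C ((r + 1 : ℕ) : R) * ∑ j, X j)
  set kill : MvPolynomial σ R →ₐ[R] MvPolynomial σ R := aeval fun j => if j ∈ S then 0 else X j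
  set Y : MvPolynomial σ R := ∑ j, (if j ∈ S then 0 else 1 : R) • X j
  have hsplit :
      gridPoly d α = C ((d : R) ^ #S) * monomial (∑ i ∈ S, Finsupp.single i 1) 1 * P := by
    rw [gridPoly, prod_congr rfl fun i _ => prod_range_eq_ite_mul_prod_range_pred _ (α i),
      prod_mul_distrib, ← prod_filter]
    simp [S, monomial_sum_one, prod_mul_distrib, X, P]
  have hkill_factor (i : σ) (hi : i ∈ S) (r : ℕ) :
      kill (C (d : R) * X i - C ((r + 1 : ℕ) : R) * ∑ j, X j) = C (-((r : R) + 1)) * Y := by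
    simp [kill, Y, hi, ite_smul]
    ring
  have hkill_prod (i : σ) :
      kill (∏ r ∈ range (α i - 1), (C (d : R) * X i - C ((r + 1 : ℕ) : R) * ∑ j, X j))
        = C ((-1) ^ (α i - 1) * ((α i - 1).factorial : R)) * Y ^ (α i - 1) := by
    rw [map_prod, prod_congr rfl fun r hr => hkill_factor i ?_ r, prod_mul_distrib, prod_const,
      card_range, ← map_prod, prod_range_neg_add_one]
    simp only [S, mem_filter, mem_univ, true_and]
    have := mem_range.mp hr
    omega
  have hdeg : ∑ i, (α i - 1) = #Sᶜ := by rw [sum_sub_one_eq_sum_sub_card, hα, hScompl]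
  have hkill : kill P = C ((-1) ^ #Sᶜ * ∏ i, ((α i - 1).factorial : R)) * Y ^ #Sᶜ := by
    rw [map_prod, prod_congr rfl fun i _ => hkill_prod i, prod_mul_distrib, ← map_prod,
      prod_pow_eq_pow_sum, hdeg, prod_mul_distrib, prod_pow_eq_pow_sum, hdeg]
  rw [hsplit, ← sum_add_sum_compl S, mul_assoc, coeff_C_mul, coeff_monomial_mul, one_mul,
    ← coeff_aeval_ite_mem_zero_X (S := S) (fun i hi => by simp [Finsupp.sum_single_one_apply, hi]),
    hkill, coeff_C_mul, coeff_sum_single_one_pow_card,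
    prod_eq_one fun i hi => if_neg (mem_compl.mp hi), hScompl]
  ring

theorem coeff_gridPoly_div {K : Type*} [Field K] [CharZero K] [DecidableEq σ] {α : σ → ℕ}
    (hα : ∑ i, α i = Fintype.card σ) :
    coeff (∑ i, Finsupp.single i 1) (gridPoly (Fintype.card σ) α : MvPolynomial σ K) /
        ((Fintype.card σ : K) ^ Fintype.card σ * ∏ i, ((α i).factorial : K))
      = (-1) ^ (Fintype.card σ - #{i | α i ≠ 0}) *
          ((Fintype.card σ - #{i | α i ≠ 0}).factorial : K) /
          ((Fintype.card σ : K) ^ (Fintype.card σ - #{i | α i ≠ 0}) *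
            ∏ i ∈ {i | α i ≠ 0}, (α i : K)) := by
  rw [coeff_gridPoly _ hα, prod_factorial_eq_prod_mul_prod_factorial_sub_one α]
  set N := Fintype.card σ
  set S : Finset σ := {i | α i ≠ 0}
  have hpow : (N : K) ^ N = (N : K) ^ #S * (N : K) ^ (N - #S) := by
    rw [← pow_add, Nat.add_sub_cancel' (card_le_univ S)]
  have hN : (N : K) ^ #S * (N : K) ^ (N - #S) ≠ 0 := by
    rw [← hpow]
    exact_mod_cast Nat.pow_self_pos.ne'
  have hS : ∏ i ∈ S, (α i : K) ≠ 0 :=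
    prod_ne_zero_iff.mpr fun i hi => Nat.cast_ne_zero.mpr (mem_filter.mp hi).2
  have hfact : ∏ i, ((α i - 1).factorial : K) ≠ 0 :=
    prod_ne_zero_iff.mpr fun i _ => Nat.cast_ne_zero.mpr (Nat.factorial_ne_zero _)
  rw [hpow]
  field_simp [left_ne_zero_of_mul hN, right_ne_zero_of_mul hN]

end GridPoly

theorem IsHomogeneous.coeff_sum_single_one_eq_sum {K : Type*} [Field K] [CharZero K] {n : ℕ}
    {p : MvPolynomial (Fin n) K} (hp : p.IsHomogeneous n) :
    coeff (∑ i, Finsupp.single i 1) p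
      = ∑ α ∈ Nat.antidiagonalTuple n n,
          (-1) ^ (n - #{i | α i ≠ 0}) * ((n - #{i | α i ≠ 0}).factorial : K) /
            ((n : K) ^ (n - #{i | α i ≠ 0}) * ∏ i ∈ {i | α i ≠ 0}, (α i : K)) *
          eval (fun i => (α i : K)) p := by
  conv_lhs => rw [hp.eq_sum_gridPoly]
  simp only [coeff_sum, coeff_smul, smul_eq_mul]
  refine sum_congr rfl fun α hα => ?_
  have hweight := coeff_gridPoly_div (K := K) (α := α)
    (by simpa using Nat.mem_antidiagonalTuple.mp hα)
  simp only [Fintype.card_fin] at hweight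
  rw [← hweight]
  ring

end MvPolynomial

theorem stmt6_general (n : ℕ) (x : Fin n → ℝ) :
    ∏ i, x i
    = ∑ α ∈ Finset.Nat.antidiagonalTuple n n,
        (-1 : ℝ) ^ (n - (Finset.univ.filter fun i => α i ≠ 0).card) *
            ((n - (Finset.univ.filter fun i => α i ≠ 0).card).factorial : ℝ) /
            ((n.factorial : ℝ) *
              (n : ℝ) ^ (n - (Finset.univ.filter fun i => α i ≠ 0).card) *
              ∏ i ∈ Finset.univ.filter fun i => α i ≠ 0, (α i : ℝ)) *
          (∑ i, (α i : ℝ) * x i) ^ n := by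
  have hlin : (∑ i, x i • X i : MvPolynomial (Fin n) ℝ).IsHomogeneous 1 :=
    IsHomogeneous.sum _ _ _ fun i _ => by
      simpa [smul_eq_C_mul] using isHomogeneous_C_mul_X (x i) i
  have hQ : ((∑ i, x i • X i : MvPolynomial (Fin n) ℝ) ^ n).IsHomogeneous n := by
    simpa using hlin.pow n
  have hcoeff := hQ.coeff_sum_single_one_eq_sum
  have hlhs : coeff (∑ i, Finsupp.single i 1) ((∑ i, x i • X i) ^ n) = n.factorial * ∏ i, x i := by
    simpa using coeff_sum_single_one_pow_card (univ : Finset (Fin n)) x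
  have hfact : (n.factorial : ℝ) ≠ 0 := Nat.cast_ne_zero.mpr n.factorial_ne_zero
  rw [hlhs] at hcoeff
  rw [eq_div_of_mul_eq hfact ((mul_comm _ _).trans hcoeff), sum_div]
  refine sum_congr rfl fun α _ => ?_
  simp only [map_pow, map_sum, smul_eval, eval_X, mul_comm (x _)]
  field_simp

theorem stmt6 (n : ℕ) (hn : 0 < n) (x : Fin n → ℝ) :
    ∏ i, x i
    = ∑ α ∈ Finset.Nat.antidiagonalTuple n n,
        (-1 : ℝ) ^ (n - (Finset.univ.filter fun i => α i ≠ 0).card) *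
            ((n - (Finset.univ.filter fun i => α i ≠ 0).card).factorial : ℝ) /
            ((n.factorial : ℝ) *
              (n : ℝ) ^ (n - (Finset.univ.filter fun i => α i ≠ 0).card) *
              ∏ i ∈ Finset.univ.filter fun i => α i ≠ 0, (α i : ℝ)) *
          (∑ i, (α i : ℝ) * x i) ^ n :=
  stmt6_general n x
end

section
/- For all positive integers n and d, the set of polynomials { ⟨α, x⟩^d : α ∈ B(n,d) } spans the space ℍ_d[x] of real homogeneous polynomials of degree d in n variables, and since it has cardinality C(n+d-1, d) = dim ℍ_d[x], it is a basis of ℍ_d[x]. -/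
/-!
The coefficient of `x^β` in `⟨α, x⟩^d` is `multinomial β * α^β`, so both claims reduce to the
invertibility of the square matrix `(α^β)` indexed by `B(n,d)`. That matrix sends the coefficient
vector of a form of degree `d` to its values on `B(n,d)`, and it is surjective because these values
can be prescribed freely, using the Lagrange-type forms `∏ᵢ ∏_{j<βᵢ} (d xᵢ - j ∑ₖ xₖ)`.
-/

open MvPolynomial Finset Finset.Nat
open Finsupp (equivFunOnFinite)
open scoped Matrix

variable {R K : Type*} [CommRing R] [Field K] [CharZero K] {n d : ℕ}

theorem coeff_linearForm_pow {σ : Type*} [Fintype σ] (a : σ → R) {s : σ →₀ ℕ}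
    (hs : s.degree = d) :
    coeff s ((∑ i, C (a i) * X i) ^ d) = s.multinomial * ∏ i, a i ^ s i := by
  simp_rw [← smul_eq_C_mul, coeff_linearCombination_X_pow_of_fintype]
  rw [if_pos (hs ▸ rfl), Finsupp.prod_fintype _ _ fun _ => pow_zero _]

theorem isHomogeneous_linearForm_pow {σ : Type*} [Fintype σ] (a : σ → R) (d : ℕ) :
    ((∑ i, C (a i) * X i) ^ d).IsHomogeneous d := by
  simpa using (IsHomogeneous.sum _ _ 1 fun i _ => isHomogeneous_C_mul_X (a i) i).pow d

theorem mem_antidiagonalTuple_of_mem_support {q : MvPolynomial (Fin n) R}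
    (hq : q.IsHomogeneous d) {s : Fin n →₀ ℕ} (hs : s ∈ q.support) :
    ⇑s ∈ antidiagonalTuple n d := by
  rw [mem_antidiagonalTuple, ← Finsupp.degree_eq_sum, Finsupp.degree_eq_weight_one]
  exact hq (mem_support_iff.mp hs)

theorem eval_eq_sum_antidiagonalTuple {q : MvPolynomial (Fin n) R} (hq : q.IsHomogeneous d)
    (x : Fin n → R) :
    eval x q = ∑ β ∈ antidiagonalTuple n d,
      coeff (equivFunOnFinite.symm β) q * ∏ i, x i ^ β i := by
  have hmap : ∑ β ∈ antidiagonalTuple n d,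
      coeff (equivFunOnFinite.symm β) q * ∏ i, x i ^ β i =
      ∑ s ∈ (antidiagonalTuple n d).map equivFunOnFinite.symm.toEmbedding,
        coeff s q * ∏ i, x i ^ s i := by
    simp
  rw [eval_eq', hmap]
  refine Finset.sum_subset (fun s hs => ?_) fun s _ hs => ?_
  · exact Finset.mem_map_equiv.mpr (mem_antidiagonalTuple_of_mem_support hq hs)
  · rw [notMem_support_iff.mp hs, zero_mul]

theorem eq_of_isHomogeneous_of_coeff_eq {p q : MvPolynomial (Fin n) R}
    (hp : p.IsHomogeneous d) (hq : q.IsHomogeneous d)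
    (h : ∀ β ∈ antidiagonalTuple n d,
      coeff (equivFunOnFinite.symm β) p = coeff (equivFunOnFinite.symm β) q) :
    p = q := by
  ext s
  by_cases hs : s.degree = d
  · simpa using h s (by rwa [mem_antidiagonalTuple, ← Finsupp.degree_eq_sum])
  · rw [hp.coeff_eq_zero hs, hq.coeff_eq_zero hs]

theorem exists_lt_of_mem_antidiagonalTuple_of_ne {α β : Fin n → ℕ}
    (hα : α ∈ antidiagonalTuple n d) (hβ : β ∈ antidiagonalTuple n d) (hne : α ≠ β) :
    ∃ i, α i < β i := by
  by_contra! h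
  rw [mem_antidiagonalTuple] at hα hβ
  have heq := (Finset.sum_eq_sum_iff_of_le fun i _ => h i).mp (hβ.trans hα.symm)
  exact hne (funext fun i => (heq i (mem_univ i)).symm)

variable (R) in
/-- On the hyperplane `∑ x = d` the factor `d xᵢ - j ∑ x` equals `d (xᵢ - j)`, so on `B(n,d)` this
form is a multiple of `∏ᵢ xᵢ (xᵢ - 1) ⋯ (xᵢ - βᵢ + 1)`: it vanishes at every `α ≠ β` of
`B(n,d)` (some `αᵢ < βᵢ` there) but not at `β`. -/
noncomputable def simplexLagrange (d : ℕ) (β : Fin n → ℕ) : MvPolynomial (Fin n) R :=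
  ∏ i, ∏ j ∈ range (β i), (C (d : R) * X i - C (j : R) * ∑ k, X k)

theorem isHomogeneous_simplexLagrange {β : Fin n → ℕ} (hβ : β ∈ antidiagonalTuple n d) :
    (simplexLagrange R d β).IsHomogeneous d := by
  have hlin : ∀ (i : Fin n) (j : ℕ),
      (C (d : R) * X i - C (j : R) * ∑ k, X k).IsHomogeneous 1 := fun i j =>
    (isHomogeneous_C_mul_X _ _).sub
      ((IsHomogeneous.sum _ _ _ fun k _ => isHomogeneous_X R k).C_mul _)
  have hprod := IsHomogeneous.prod univ _ (fun i => β i) fun i _ => by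
    simpa using IsHomogeneous.prod (range (β i)) _ (fun _ => 1) fun j _ => hlin i j
  rwa [mem_antidiagonalTuple.mp hβ] at hprod

theorem eval_simplexLagrange {α : Fin n → ℕ} (hα : α ∈ antidiagonalTuple n d)
    (β : Fin n → ℕ) :
    eval (fun i => (α i : R)) (simplexLagrange R d β) =
      ∏ i, ∏ j ∈ range (β i), (d : R) * ((α i : R) - j) := by
  have hsum : ∑ k, (α k : R) = d := by rw [← Nat.cast_sum, mem_antidiagonalTuple.mp hα]
  simp only [simplexLagrange, map_prod, map_sub, map_mul, eval_C, eval_X, map_sum, hsum]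
  simp_rw [mul_sub, mul_comm (d : R)]

theorem eval_simplexLagrange_of_ne {α β : Fin n → ℕ} (hα : α ∈ antidiagonalTuple n d)
    (hβ : β ∈ antidiagonalTuple n d) (hne : α ≠ β) :
    eval (fun i => (α i : R)) (simplexLagrange R d β) = 0 := by
  obtain ⟨i, hi⟩ := exists_lt_of_mem_antidiagonalTuple_of_ne hα hβ hne
  rw [eval_simplexLagrange hα]
  exact prod_eq_zero (mem_univ i) (prod_eq_zero (mem_range.mpr hi) (by simp))

theorem eval_simplexLagrange_self_ne_zero {β : Fin n → ℕ} (hβ : β ∈ antidiagonalTuple n d) :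
    eval (fun i => (β i : K)) (simplexLagrange K d β) ≠ 0 := by
  rw [eval_simplexLagrange hβ]
  refine prod_ne_zero_iff.mpr fun i _ => prod_ne_zero_iff.mpr fun j hj => ?_
  have hβi : β i ≤ d := (mem_antidiagonalTuple.mp hβ) ▸ single_le_sum (by simp) (mem_univ i)
  have hj := mem_range.mp hj
  refine mul_ne_zero (by norm_cast; omega) (sub_ne_zero.mpr ?_)
  exact_mod_cast hj.ne'

theorem exists_isHomogeneous_eval_eq (v : antidiagonalTuple n d → K) :
    ∃ q : MvPolynomial (Fin n) K, q.IsHomogeneous d ∧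
      ∀ α : antidiagonalTuple n d, eval (fun i => (α.1 i : K)) q = v α := by
  let c (β : antidiagonalTuple n d) : K :=
    v β / eval (fun i => (β.1 i : K)) (simplexLagrange K d β.1)
  refine ⟨∑ β, C (c β) * simplexLagrange K d β.1, IsHomogeneous.sum _ _ d fun β _ =>
    (isHomogeneous_simplexLagrange β.2).C_mul _, fun α => ?_⟩
  rw [map_sum, sum_eq_single α]
  · rw [eval_mul, eval_C, div_mul_cancel₀ _ (eval_simplexLagrange_self_ne_zero α.2)]
  · intro β _ hne
    rw [eval_mul, eval_C, eval_simplexLagrange_of_ne α.2 β.2 (Subtype.coe_ne_coe.mpr hne.symm),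
      mul_zero]
  · simp

variable (R) in
noncomputable def simplexPowerMatrix (n d : ℕ) :
    Matrix (antidiagonalTuple n d) (antidiagonalTuple n d) R :=
  Matrix.of fun α β => ∏ i, (α.1 i : R) ^ β.1 i

theorem simplexPowerMatrix_mulVec_coeff {q : MvPolynomial (Fin n) R} (hq : q.IsHomogeneous d) :
    simplexPowerMatrix R n d *ᵥ (fun β => coeff (equivFunOnFinite.symm β.1) q) =
      fun α => eval (fun i => (α.1 i : R)) q := by
  ext α
  rw [eval_eq_sum_antidiagonalTuple hq, ← sum_coe_sort]
  simp only [Matrix.mulVec, dotProduct, simplexPowerMatrix, Matrix.of_apply, mul_comm]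

theorem isUnit_simplexPowerMatrix : IsUnit (simplexPowerMatrix K n d) := by
  refine Matrix.mulVec_surjective_iff_isUnit.mp fun v => ?_
  obtain ⟨q, hq, hqv⟩ := exists_isHomogeneous_eval_eq v
  exact ⟨_, (simplexPowerMatrix_mulVec_coeff hq).trans (funext hqv)⟩

theorem coeff_sum_smul_linearForm_pow (g : antidiagonalTuple n d → R) (β : antidiagonalTuple n d) :
    coeff (equivFunOnFinite.symm β.1) (∑ α, g α • (∑ i, C (α.1 i : R) * X i) ^ d) =
      (equivFunOnFinite.symm β.1).multinomial * (g ᵥ* simplexPowerMatrix R n d) β := by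
  have hβ : (equivFunOnFinite.symm β.1).degree = d := by
    simpa [Finsupp.degree_eq_sum] using mem_antidiagonalTuple.mp β.2
  simp only [coeff_sum, coeff_smul, coeff_linearForm_pow _ hβ, Matrix.vecMul, dotProduct,
    simplexPowerMatrix, Matrix.of_apply, mul_sum, smul_eq_mul,
    Finsupp.equivFunOnFinite_symm_apply_apply]
  exact sum_congr rfl fun α _ => by ring

theorem multinomial_cast_ne_zero {σ : Type*} (s : σ →₀ ℕ) : (s.multinomial : K) ≠ 0 :=
  Nat.cast_ne_zero.mpr (Finsupp.multinomial_eq s ▸ (Nat.multinomial_pos _ _).ne')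

theorem linearIndependent_linearForm_pow :
    LinearIndependent K fun α : antidiagonalTuple n d => (∑ i, C (α.1 i : K) * X i) ^ d := by
  refine Fintype.linearIndependent_iff.mpr fun g hg => ?_
  have hvecMul : g ᵥ* simplexPowerMatrix K n d = 0 ᵥ* simplexPowerMatrix K n d := by
    ext β
    have hβ := congrArg (coeff (equivFunOnFinite.symm β.1)) hg
    rw [coeff_sum_smul_linearForm_pow, coeff_zero] at hβ
    rw [Matrix.zero_vecMul]
    exact (mul_eq_zero.mp hβ).resolve_left (multinomial_cast_ne_zero _)
  exact congrFun (Matrix.vecMul_injective_iff_isUnit.mpr isUnit_simplexPowerMatrix hvecMul)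

theorem span_linearForm_pow :
    Submodule.span K ((fun α : Fin n → ℕ => (∑ i, C (α i : K) * X i) ^ d) ''
      (antidiagonalTuple n d : Set (Fin n → ℕ))) = homogeneousSubmodule (Fin n) K d := by
  refine le_antisymm (Submodule.span_le.mpr ?_) fun p hp => ?_
  · rintro _ ⟨α, -, rfl⟩
    exact isHomogeneous_linearForm_pow _ d
  obtain ⟨g, hg⟩ : ∃ g, g ᵥ* simplexPowerMatrix K n d = fun β =>
      coeff (equivFunOnFinite.symm β.1) p / (equivFunOnFinite.symm β.1).multinomial :=
    Matrix.vecMul_surjective_iff_isUnit.mpr isUnit_simplexPowerMatrix _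
  have hp_eq : ∑ α, g α • (∑ i, C (α.1 i : K) * X i) ^ d = p := by
    refine eq_of_isHomogeneous_of_coeff_eq
      (Submodule.sum_mem _ fun α _ => Submodule.smul_mem (homogeneousSubmodule (Fin n) K d) _
        (isHomogeneous_linearForm_pow _ d)) hp fun β hβ => ?_
    rw [coeff_sum_smul_linearForm_pow g ⟨β, hβ⟩, congrFun hg ⟨β, hβ⟩,
      mul_div_cancel₀ _ (multinomial_cast_ne_zero _)]
  rw [← hp_eq]
  exact Submodule.sum_mem _ fun α _ =>
    Submodule.smul_mem _ _ (Submodule.subset_span ⟨α.1, α.2, rfl⟩)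

theorem stmt7_general (n d : ℕ) :
    Submodule.span ℝ
        ((fun α : Fin n → ℕ => (∑ i, C ((α i : ℝ)) * X i) ^ d) ''
          (Finset.Nat.antidiagonalTuple n d : Set (Fin n → ℕ)))
      = homogeneousSubmodule (Fin n) ℝ d
    ∧ LinearIndependent ℝ
        (fun α : {a // a ∈ Finset.Nat.antidiagonalTuple n d} =>
          (∑ i, C (((α : Fin n → ℕ) i : ℝ)) * X i) ^ d) :=
  ⟨span_linearForm_pow, linearIndependent_linearForm_pow⟩

theorem stmt7 (n d : ℕ) (hn : 0 < n) (hd : 0 < d) :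
    Submodule.span ℝ
        ((fun α : Fin n → ℕ => (∑ i, C ((α i : ℝ)) * X i) ^ d) ''
          (Finset.Nat.antidiagonalTuple n d : Set (Fin n → ℕ)))
      = homogeneousSubmodule (Fin n) ℝ d
    ∧ LinearIndependent ℝ
        (fun α : {a // a ∈ Finset.Nat.antidiagonalTuple n d} =>
          (∑ i, C (((α : Fin n → ℕ) i : ℝ)) * X i) ^ d) :=
  stmt7_general n d
end

section
/- For every monomial x^α with α ∈ B(n,d), there exist real coefficients c_γ such that x^α = Σ_{γ ∈ B(n,d)} c_γ ⟨γ, x⟩^d; moreover the coefficients can be chosen so that c_γ = 0 whenever γ has a nonzero entry in a coordinate where α is zero (i.e., the support of γ is contained in the support of α). -/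
/-!
Fix a coordinate `j` with `α j ≠ 0` and write `z i = x i - x j`. Expanding `x i = z i + x j`
turns `x^α` into a combination of the monomials `x_j^(d - |μ|) z^μ` with `μ ≤ α`.

For `k` with `|k| ≤ d`, putting the missing degree `d - |k|` into coordinate `j` gives a
`γ` with `|γ| = d` and `⟨γ, x⟩ = d x_j + ⟨k, z⟩`. The `μ`-th mixed forward difference in `k` of
`⟨γ, x⟩^d` is a nonzero multiple of `x_j^(d - |μ|) z^μ` plus multiples of `x_j^(d - |ν|) z^ν`
with `ν ≥ μ`, `ν ≠ μ` and `supp ν ⊆ supp μ`, because `Δ^m t^r` vanishes at `0` for `r < m`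
and equals `m!` for `r = m`. This system is triangular, so downward induction on `|μ|` puts every
`x_j^(d - |μ|) z^μ`, and hence `x^α`, in the span of the `⟨γ, x⟩^d` with `supp γ ⊆ supp α`.
-/

open Finset fwdDiff

lemma fwdDiff_iter_pow_apply_zero (m r : ℕ) :
    (Δ_[1])^[m] (fun t : ℝ => t ^ r) 0
      = ∑ k ∈ range (m + 1), (-1 : ℝ) ^ (m - k) * m.choose k * (k : ℝ) ^ r := by
  rw [fwdDiff_iter_eq_sum_shift]
  refine sum_congr rfl fun k _ => ?_
  simp [zsmul_eq_mul]

lemma fwdDiff_iter_pow_self_apply_zero (m : ℕ) :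
    (Δ_[1])^[m] (fun t : ℝ => t ^ m) 0 = m.factorial := by
  simp [fwdDiff_iter_eq_factorial]

lemma le_of_fwdDiff_iter_pow_apply_zero_ne_zero {m r : ℕ}
    (h : (Δ_[1])^[m] (fun t : ℝ => t ^ r) 0 ≠ 0) : m ≤ r ∧ (m = 0 → r = 0) := by
  refine ⟨?_, ?_⟩
  · contrapose! h
    simp [fwdDiff_iter_pow_eq_zero_of_lt h]
  · rintro rfl
    contrapose! h
    simp [zero_pow h]

lemma Submodule.mem_of_sum_smul_mem {K M α : Type*} [DivisionRing K] [AddCommGroup M]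
    [Module K M] [DecidableEq α] (V : Submodule K M) {s : Finset α} {c : α → K} {f : α → M}
    {a : α} (ha : a ∈ s) (hca : c a ≠ 0) (hsum : ∑ p ∈ s, c p • f p ∈ V)
    (hrest : ∀ p ∈ s, p ≠ a → c p ≠ 0 → f p ∈ V) : f a ∈ V := by
  rw [← add_sum_erase s _ ha] at hsum
  have hrest' : ∑ p ∈ s.erase a, c p • f p ∈ V := V.sum_mem fun p hp => by
    obtain ⟨hpa, hps⟩ := mem_erase.1 hp
    by_cases hcp : c p = 0
    · simp [hcp]
    · exact V.smul_mem _ (hrest p hps hpa hcp)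
  exact (V.smul_mem_iff hca).1 ((V.add_mem_iff_left hrest').1 hsum)

variable {ι : Type*} [Fintype ι]

noncomputable def linearFormPow (d : ℕ) (γ : ι → ℕ) (x : ι → ℝ) : ℝ := (∑ i, (γ i : ℝ) * x i) ^ d

noncomputable def powerSpan (d : ℕ) (S : Set ι) : Submodule ℝ ((ι → ℝ) → ℝ) :=
  Submodule.span ℝ (linearFormPow d '' {γ | ∑ i, γ i = d ∧ Function.support γ ⊆ S})

def pivotMonomial (j : ι) (d : ℕ) (μ : ι → ℕ) (x : ι → ℝ) : ℝ :=
  x j ^ (d - ∑ i, μ i) * ∏ i, (x i - x j) ^ μ i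

noncomputable def diffCoeff (d : ℕ) (μ ν : ι → ℕ) : ℝ :=
  d.choose (∑ i, ν i) * Nat.multinomial univ ν * (d : ℝ) ^ (d - ∑ i, ν i) *
    ∏ i, (Δ_[1])^[μ i] (fun t : ℝ => t ^ ν i) 0

lemma diffCoeff_self_ne_zero {d : ℕ} {μ : ι → ℕ} (hμ : ∑ i, μ i ≤ d) : diffCoeff d μ μ ≠ 0 := by
  have hchoose : (d.choose (∑ i, μ i) : ℝ) ≠ 0 := Nat.cast_ne_zero.2 (Nat.choose_pos hμ).ne'
  have hmult : (Nat.multinomial univ μ : ℝ) ≠ 0 := Nat.cast_ne_zero.2 (Nat.multinomial_pos _ _).ne'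
  have hpow : (d : ℝ) ^ (d - ∑ i, μ i) ≠ 0 := by
    rcases Nat.eq_zero_or_pos d with rfl | hd
    · simp
    · exact pow_ne_zero _ (Nat.cast_ne_zero.2 hd.ne')
  simp only [diffCoeff, fwdDiff_iter_pow_self_apply_zero]
  exact mul_ne_zero (mul_ne_zero (mul_ne_zero hchoose hmult) hpow)
    (prod_ne_zero_iff.2 fun i _ => Nat.cast_ne_zero.2 (Nat.factorial_ne_zero _))

lemma le_and_support_subset_of_diffCoeff_ne_zero {d : ℕ} {μ ν : ι → ℕ}
    (h : diffCoeff d μ ν ≠ 0) : μ ≤ ν ∧ Function.support ν ⊆ Function.support μ := by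
  have hi : ∀ i, μ i ≤ ν i ∧ (μ i = 0 → ν i = 0) := fun i =>
    le_of_fwdDiff_iter_pow_apply_zero_ne_zero
      (prod_ne_zero_iff.1 (right_ne_zero_of_mul h) i (mem_univ i))
  exact ⟨fun i => (hi i).1, fun i hν hμ => hν ((hi i).2 hμ)⟩

variable [DecidableEq ι]

lemma le_of_mem_piFinset_range {μ k : ι → ℕ}
    (hk : k ∈ Fintype.piFinset fun i => range (μ i + 1)) : k ≤ μ :=
  fun i => Nat.lt_succ_iff.1 (mem_range.1 (Fintype.mem_piFinset.1 hk i))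

lemma sum_piFinset_alternating_choose_mul_prod_pow (μ ν : ι → ℕ) (z : ι → ℝ) :
    ∑ k ∈ Fintype.piFinset (fun i => range (μ i + 1)),
        (∏ i, (-1 : ℝ) ^ (μ i - k i) * (μ i).choose (k i)) * ∏ i, (k i * z i) ^ ν i
      = (∏ i, (Δ_[1])^[μ i] (fun t : ℝ => t ^ ν i) 0) * ∏ i, z i ^ ν i := by
  simp_rw [fwdDiff_iter_pow_apply_zero, prod_univ_sum, sum_mul]
  refine sum_congr rfl fun k _ => ?_
  simp only [← prod_mul_distrib, mul_pow]
  exact prod_congr rfl fun i _ => by ring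

lemma add_sum_pow_eq_sum_biUnion {R : Type*} [CommSemiring R] (a : R) (f : ι → R) (d : ℕ) :
    (a + ∑ i, f i) ^ d = ∑ ν ∈ (range (d + 1)).biUnion (piAntidiag univ),
      (d.choose (∑ i, ν i) * Nat.multinomial univ ν : R) *
        (a ^ (d - ∑ i, ν i) * ∏ i, f i ^ ν i) := by
  have hdisj : (range (d + 1) : Set ℕ).PairwiseDisjoint (piAntidiag (univ : Finset ι)) :=
    fun r _ r' _ hne => disjoint_left.mpr fun ν h h' =>
      hne ((mem_piAntidiag.1 h).1.symm.trans (mem_piAntidiag.1 h').1)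
  rw [sum_biUnion hdisj, add_comm, add_pow]
  refine sum_congr rfl fun r _ => ?_
  rw [sum_pow_eq_sum_piAntidiag, sum_mul, sum_mul]
  refine sum_congr rfl fun ν hν => ?_
  rw [(mem_piAntidiag.1 hν).1]
  ring

def homogenize (j : ι) (d : ℕ) (k : ι → ℕ) : ι → ℕ := k + Pi.single j (d - ∑ i, k i)

lemma sum_homogenize {k : ι → ℕ} {d : ℕ} (hk : ∑ i, k i ≤ d) (j : ι) :
    ∑ i, homogenize j d k i = d := by
  simp only [homogenize, Pi.add_apply, sum_add_distrib, Finset.sum_pi_single', mem_univ, if_true]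
  omega

lemma support_homogenize_subset {j : ι} {S : Set ι} (hj : j ∈ S) {k : ι → ℕ}
    (hk : Function.support k ⊆ S) (d : ℕ) : Function.support (homogenize j d k) ⊆ S := by
  intro i hi
  by_cases hij : i = j
  · exact hij ▸ hj
  · apply hk
    simpa [homogenize, Pi.single_eq_of_ne hij] using hi

lemma sum_cast_homogenize_mul {k : ι → ℕ} {d : ℕ} (hk : ∑ i, k i ≤ d) (j : ι) (x : ι → ℝ) :
    ∑ i, (homogenize j d k i : ℝ) * x i = d * x j + ∑ i, k i * (x i - x j) := by
  simp only [homogenize, Pi.add_apply, Nat.cast_add, add_mul, sum_add_distrib, mul_sub,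
    sum_sub_distrib, ← sum_mul]
  have hsingle : ∑ i, ((Pi.single j (d - ∑ i, k i) : ι → ℕ) i : ℝ) * x i
      = (d - ∑ i, (k i : ℝ)) * x j := by
    rw [Fintype.sum_eq_single j fun i hi => by simp [Pi.single_eq_of_ne hi], Pi.single_eq_same,
      Nat.cast_sub hk, Nat.cast_sum]
  rw [hsingle]
  ring

lemma sum_smul_linearFormPow_homogenize (j : ι) {d : ℕ} {μ : ι → ℕ} (hμ : ∑ i, μ i ≤ d) :
    ∑ k ∈ Fintype.piFinset (fun i => range (μ i + 1)),
        (∏ i, (-1 : ℝ) ^ (μ i - k i) * (μ i).choose (k i)) • linearFormPow d (homogenize j d k)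
      = ∑ ν ∈ (range (d + 1)).biUnion (piAntidiag univ), diffCoeff d μ ν • pivotMonomial j d ν := by
  ext x
  simp only [Finset.sum_apply, Pi.smul_apply, smul_eq_mul, linearFormPow]
  calc _ = ∑ k ∈ Fintype.piFinset (fun i => range (μ i + 1)),
          (∏ i, (-1 : ℝ) ^ (μ i - k i) * (μ i).choose (k i)) *
            ∑ ν ∈ (range (d + 1)).biUnion (piAntidiag univ),
              (d.choose (∑ i, ν i) * Nat.multinomial univ ν : ℝ) *
                ((d * x j) ^ (d - ∑ i, ν i) * ∏ i, (k i * (x i - x j)) ^ ν i) := by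
        refine sum_congr rfl fun k hk => ?_
        have hk : ∑ i, k i ≤ d :=
          (sum_le_sum fun i _ => le_of_mem_piFinset_range hk i).trans hμ
        rw [sum_cast_homogenize_mul hk, add_sum_pow_eq_sum_biUnion]
    _ = _ := by
        simp_rw [mul_sum]
        rw [sum_comm]
        refine sum_congr rfl fun ν _ => ?_
        set A : ℝ := d.choose (∑ i, ν i) * Nat.multinomial univ ν * (d * x j) ^ (d - ∑ i, ν i)
          with hA
        calc _ = A * ∑ k ∈ Fintype.piFinset (fun i => range (μ i + 1)),
              (∏ i, (-1 : ℝ) ^ (μ i - k i) * (μ i).choose (k i)) *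
                ∏ i, (k i * (x i - x j)) ^ ν i := by
              rw [mul_sum]
              exact sum_congr rfl fun k _ => by ring
          _ = _ := by
              rw [sum_piFinset_alternating_choose_mul_prod_pow, diffCoeff, pivotMonomial, hA,
                mul_pow]
              ring

lemma sum_smul_pivotMonomial_mem_powerSpan {j : ι} {S : Set ι} (hj : j ∈ S) {d : ℕ}
    {μ : ι → ℕ} (hμS : Function.support μ ⊆ S) (hμd : ∑ i, μ i ≤ d) :
    ∑ ν ∈ (range (d + 1)).biUnion (piAntidiag univ), diffCoeff d μ ν • pivotMonomial j d ν
      ∈ powerSpan d S := by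
  rw [← sum_smul_linearFormPow_homogenize j hμd]
  refine Submodule.sum_mem _ fun k hk => Submodule.smul_mem _ _ (Submodule.subset_span ?_)
  have hkμ := le_of_mem_piFinset_range hk
  refine ⟨_, ⟨sum_homogenize ((sum_le_sum fun i _ => hkμ i).trans hμd) j,
    support_homogenize_subset hj (fun i hi => hμS fun h => hi ?_) d⟩, rfl⟩
  exact Nat.le_zero.1 (h ▸ hkμ i)

theorem pivotMonomial_mem_powerSpan {j : ι} {S : Set ι} (hj : j ∈ S) {d : ℕ} (μ : ι → ℕ)
    (hμS : Function.support μ ⊆ S) (hμd : ∑ i, μ i ≤ d) :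
    pivotMonomial j d μ ∈ powerSpan d S := by
  induction hgap : d - ∑ i, μ i using Nat.strong_induction_on generalizing μ with
  | _ t ih =>
    refine Submodule.mem_of_sum_smul_mem _ ?_ (diffCoeff_self_ne_zero hμd)
      (sum_smul_pivotMonomial_mem_powerSpan hj hμS hμd) fun ν hν hνμ hc => ?_
    · simpa using hμd
    obtain ⟨hle, hsupp⟩ := le_and_support_subset_of_diffCoeff_ne_zero hc
    have hνd : ∑ i, ν i ≤ d := by simpa using hν
    have hlt : ∑ i, μ i < ∑ i, ν i := Fintype.sum_strictMono (hle.lt_of_ne hνμ.symm)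
    exact ih _ (by omega) ν (hsupp.trans hμS) hνd rfl

lemma monomial_eq_sum_pivotMonomial (j : ι) {d : ℕ} {α : ι → ℕ} (hα : ∑ i, α i = d) :
    (fun x : ι → ℝ => ∏ i, x i ^ α i)
      = ∑ μ ∈ Fintype.piFinset (fun i => range (α i + 1)),
          (∏ i, ((α i).choose (μ i) : ℝ)) • pivotMonomial j d μ := by
  ext x
  simp only [Finset.sum_apply, Pi.smul_apply, smul_eq_mul, pivotMonomial]
  calc ∏ i, x i ^ α i = ∏ i, ((x i - x j) + x j) ^ α i := by simp
    _ = ∑ μ ∈ Fintype.piFinset (fun i => range (α i + 1)),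
          ∏ i, (x i - x j) ^ μ i * x j ^ (α i - μ i) * (α i).choose (μ i) := by
        simp_rw [add_pow, prod_univ_sum]
    _ = _ := by
        refine sum_congr rfl fun μ hμ => ?_
        have hexp : ∑ i, (α i - μ i) = d - ∑ i, μ i := by
          rw [← hα, sum_tsub_distrib _ fun i _ => le_of_mem_piFinset_range hμ i]
        rw [prod_mul_distrib, prod_mul_distrib, prod_pow_eq_pow_sum, hexp]
        ring

theorem monomial_mem_powerSpan {j : ι} {S : Set ι} (hj : j ∈ S) {d : ℕ} {α : ι → ℕ}
    (hα : ∑ i, α i = d) (hαS : Function.support α ⊆ S) :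
    (fun x : ι → ℝ => ∏ i, x i ^ α i) ∈ powerSpan d S := by
  rw [monomial_eq_sum_pivotMonomial j hα]
  refine Submodule.sum_mem _ fun μ hμ => Submodule.smul_mem _ _ ?_
  have hμα := le_of_mem_piFinset_range hμ
  refine pivotMonomial_mem_powerSpan hj μ (fun i hi => hαS fun h => hi ?_) ?_
  · exact Nat.le_zero.1 (h ▸ hμα i)
  · exact hα ▸ sum_le_sum fun i _ => hμα i

theorem stmt8_general (n d : ℕ) (hd : 0 < d) (α : Fin n → ℕ)
    (hα : α ∈ Finset.Nat.antidiagonalTuple n d) :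
    ∃ c : (Fin n → ℕ) → ℝ,
      (∀ γ ∈ Finset.Nat.antidiagonalTuple n d,
        (∃ k, α k = 0 ∧ γ k ≠ 0) → c γ = 0) ∧
      ∀ x : Fin n → ℝ,
        ∏ i, x i ^ α i
          = ∑ γ ∈ Finset.Nat.antidiagonalTuple n d, c γ * (∑ i, (γ i : ℝ) * x i) ^ d := by
  have hsum : ∑ i, α i = d := Finset.Nat.mem_antidiagonalTuple.1 hα
  obtain ⟨j, hj⟩ : ∃ j, α j ≠ 0 := by
    by_contra! h
    simp [h] at hsum
    omega
  obtain ⟨l, hl, hlα⟩ := (Finsupp.mem_span_image_iff_linearCombination ℝ).1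
    (monomial_mem_powerSpan (S := Function.support α) hj hsum subset_rfl)
  have hlB : ↑l.support ⊆ (Finset.Nat.antidiagonalTuple n d : Set (Fin n → ℕ)) := fun γ hγ =>
    Finset.Nat.mem_antidiagonalTuple.2 (hl hγ).1
  refine ⟨l, fun γ _ ⟨k, hαk, hγk⟩ => ?_, fun x => ?_⟩
  · by_contra hlγ
    exact (hl (Finsupp.mem_support_iff.2 hlγ)).2 hγk hαk
  · rw [← congrFun hlα x, Finsupp.linearCombination_apply,
      Finsupp.sum_of_support_subset l hlB (fun γ a => a • linearFormPow d γ)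
        fun _ _ => zero_smul _ _]
    simp only [Finset.sum_apply, Pi.smul_apply, smul_eq_mul, linearFormPow]

theorem stmt8 (n d : ℕ) (hn : 0 < n) (hd : 0 < d) (α : Fin n → ℕ)
    (hα : α ∈ Finset.Nat.antidiagonalTuple n d) :
    ∃ c : (Fin n → ℕ) → ℝ,
      (∀ γ ∈ Finset.Nat.antidiagonalTuple n d,
        (∃ k, α k = 0 ∧ γ k ≠ 0) → c γ = 0) ∧
      ∀ x : Fin n → ℝ,
        ∏ i, x i ^ α i
          = ∑ γ ∈ Finset.Nat.antidiagonalTuple n d, c γ * (∑ i, (γ i : ℝ) * x i) ^ d :=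
  stmt8_general n d hd α hα
end

section
/- For all positive integers n and d, the power-product matrix V(n,d), indexed by pairs (α, β) in B(n,d) × B(n,d) with entry (α)^β = Π_{k=1}^{n} α_k^{β_k} (with the convention 0^0 = 1), is nonsingular. -/
/-- The index set `B(n,d)`: vectors in `ℕ^n` with entries summing to `d`. -/
abbrev Bnd (n d : ℕ) := {α : Fin n → ℕ // α ∈ Finset.Nat.antidiagonalTuple n d}

/-- The power-product matrix `V(n,d)` with entry `(α)^β = ∏ k, α k ^ β k`
(convention `0^0 = 1`, which holds for the natural-number power). -/
noncomputable def powerProductMatrix (n d : ℕ) : Matrix (Bnd n d) (Bnd n d) ℝ :=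
  Matrix.of fun α β => ∏ k, ((α : Fin n → ℕ) k : ℝ) ^ ((β : Fin n → ℕ) k)

namespace Stmt9Aux

open Finset

/-- The monomial function `α ↦ α^γ` on `B(n,d)`. -/
noncomputable def mono (n d : ℕ) (γ : Fin n → ℕ) : Bnd n d → ℝ :=
  fun α => ∏ k, ((α : Fin n → ℕ) k : ℝ) ^ γ k

lemma sum_coord {n d : ℕ} (α : Bnd n d) : ∑ k, (α : Fin n → ℕ) k = d :=
  Finset.Nat.mem_antidiagonalTuple.mp α.2

/-- The span of the degree-`d` monomial functions on `B(n,d)`. -/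
noncomputable def S (n d : ℕ) : Submodule ℝ (Bnd n d → ℝ) :=
  Submodule.span ℝ (Set.range fun β : Bnd n d => mono n d (β : Fin n → ℕ))

lemma mono_update {n d : ℕ} (γ : Fin n → ℕ) (k : Fin n) (α : Bnd n d) :
    mono n d (Function.update γ k (γ k + 1)) α = ((α : Fin n → ℕ) k : ℝ) * mono n d γ α := by
  unfold mono
  rw [← Finset.mul_prod_erase _ _ (Finset.mem_univ k),
    ← Finset.mul_prod_erase _ (fun j => ((α : Fin n → ℕ) j : ℝ) ^ γ j) (Finset.mem_univ k)]
  rw [Finset.prod_congr rfl (fun j hj => by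
    rw [Function.update_of_ne (Finset.ne_of_mem_erase hj)])]
  rw [Function.update_self, pow_succ]
  ring

lemma mono_mem {n d : ℕ} (hd : 0 < d) :
    ∀ m (γ : Fin n → ℕ), ∑ k, γ k + m = d → mono n d γ ∈ S n d := by
  intro m
  induction m with
  | zero =>
    intro γ hγ
    exact Submodule.subset_span
      ⟨⟨γ, Finset.Nat.mem_antidiagonalTuple.mpr (by simpa using hγ)⟩, rfl⟩
  | succ m ih =>
    intro γ hγ
    have key : mono n d γ
        = (d : ℝ)⁻¹ • ∑ k : Fin n, mono n d (Function.update γ k (γ k + 1)) := by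
      funext α
      simp only [Pi.smul_apply, Finset.sum_apply, smul_eq_mul]
      rw [Finset.sum_congr rfl fun k _ => mono_update γ k α, ← Finset.sum_mul]
      rw [← Nat.cast_sum, sum_coord α]
      have hd' : (d : ℝ) ≠ 0 := by positivity
      field_simp
    rw [key]
    refine Submodule.smul_mem _ _ (Submodule.sum_mem _ fun k _ => ih _ ?_)
    rw [Finset.sum_update_of_mem (Finset.mem_univ k)]
    rw [← Finset.add_sum_erase _ γ (Finset.mem_univ k)] at hγ
    simp only [Finset.erase_eq] at hγ ⊢
    omega

/-- Evaluation of any polynomial of total degree at most `d` lies in the span of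
the degree-`d` monomial functions. -/
lemma eval_mem {n d : ℕ} (hd : 0 < d) (p : MvPolynomial (Fin n) ℝ)
    (hp : p.totalDegree ≤ d) :
    (fun α : Bnd n d => MvPolynomial.eval (fun k => ((α : Fin n → ℕ) k : ℝ)) p) ∈ S n d := by
  have hrw : (fun α : Bnd n d => MvPolynomial.eval (fun k => ((α : Fin n → ℕ) k : ℝ)) p)
      = ∑ γ ∈ p.support, MvPolynomial.coeff γ p • mono n d (γ : Fin n → ℕ) := by
    funext α
    rw [MvPolynomial.eval_eq']
    simp [mono]
  rw [hrw]
  refine Submodule.sum_mem _ fun γ hγ => Submodule.smul_mem _ _ ?_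
  have h1 : (γ.sum fun _ e => e) ≤ p.totalDegree := MvPolynomial.le_totalDegree hγ
  have h2 : ∑ k, γ k ≤ d := by
    rw [Finsupp.sum_fintype _ _ (fun _ => rfl)] at h1
    omega
  exact mono_mem hd (d - ∑ k, γ k) γ (by omega)

/-- The Newton-type polynomial `∏ k, ∏ j < β k, (X k - j)`. -/
noncomputable def newt (n : ℕ) (β : Fin n → ℕ) : MvPolynomial (Fin n) ℝ :=
  ∏ k, ∏ j ∈ Finset.range (β k), (MvPolynomial.X k - MvPolynomial.C (j : ℝ))

lemma newt_totalDegree {n : ℕ} (β : Fin n → ℕ) :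
    (newt n β).totalDegree ≤ ∑ k, β k := by
  refine le_trans (MvPolynomial.totalDegree_finset_prod _ _)
    (Finset.sum_le_sum fun k _ => ?_)
  refine le_trans (MvPolynomial.totalDegree_finset_prod _ _) ?_
  calc ∑ j ∈ Finset.range (β k),
        (MvPolynomial.X (R := ℝ) k - MvPolynomial.C (j : ℝ)).totalDegree
      ≤ ∑ _j ∈ Finset.range (β k), 1 := by
        refine Finset.sum_le_sum fun j _ => ?_
        refine le_trans (MvPolynomial.totalDegree_sub _ _) ?_
        rw [MvPolynomial.totalDegree_X, MvPolynomial.totalDegree_C]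
        simp
    _ = β k := by simp

lemma newt_eval {n d : ℕ} (β : Fin n → ℕ) (α : Bnd n d) :
    MvPolynomial.eval (fun k => ((α : Fin n → ℕ) k : ℝ)) (newt n β)
      = ∏ k, ∏ j ∈ Finset.range (β k), (((α : Fin n → ℕ) k : ℝ) - j) := by
  simp [newt]

/-- Diagonal value of the Newton product. -/
lemma diag_val (m : ℕ) : ∏ j ∈ Finset.range m, ((m : ℝ) - j) = (m.factorial : ℝ) := by
  have : ∏ j ∈ Finset.range m, ((m : ℝ) - j) = ((∏ j ∈ Finset.range m, (m - j) : ℕ) : ℝ) := by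
    rw [Nat.cast_prod]
    refine Finset.prod_congr rfl fun j hj => ?_
    have : j ≤ m := le_of_lt (Finset.mem_range.mp hj)
    push_cast [this]
    ring
  rw [this, ← Nat.descFactorial_eq_prod_range, Nat.descFactorial_self]

lemma newt_eval_eq {n d : ℕ} (α β : Bnd n d) :
    (∏ k, ∏ j ∈ Finset.range ((β : Fin n → ℕ) k), (((α : Fin n → ℕ) k : ℝ) - j))
      = if α = β then ∏ k, (((β : Fin n → ℕ) k).factorial : ℝ) else 0 := by
  by_cases h : α = β
  · subst h
    rw [if_pos rfl]
    exact Finset.prod_congr rfl fun k _ => diag_val _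
  · rw [if_neg h]
    -- there is a coordinate with α k < β k
    have hex : ∃ k, (α : Fin n → ℕ) k < (β : Fin n → ℕ) k := by
      by_contra hc
      push_neg at hc
      apply h
      have hsum : ∑ k, (β : Fin n → ℕ) k = ∑ k, (α : Fin n → ℕ) k := by
        rw [sum_coord, sum_coord]
      have := (Finset.sum_eq_sum_iff_of_le (fun k _ => hc k)).mp hsum
      ext k
      exact ((this k (Finset.mem_univ k)).symm)
    obtain ⟨k, hk⟩ := hex
    refine Finset.prod_eq_zero (Finset.mem_univ k) ?_
    refine Finset.prod_eq_zero (Finset.mem_range.mpr hk) ?_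
    simp

end Stmt9Aux

theorem stmt9 (n d : ℕ) (hn : 0 < n) (hd : 0 < d) :
    (powerProductMatrix n d).det ≠ 0 := by
  classical
  intro hdet
  obtain ⟨v, hv, hmul⟩ := Matrix.exists_vecMul_eq_zero_iff.mpr hdet
  apply hv
  funext β
  -- the linear functional f ↦ ∑ α, v α * f α
  let φ : (Bnd n d → ℝ) →ₗ[ℝ] ℝ :=
    { toFun := fun f => ∑ α, v α * f α
      map_add' := fun f g => by
        simp [mul_add, Finset.sum_add_distrib]
      map_smul' := fun c f => by
        simp [Finset.mul_sum]
        ring_nf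
        simp [mul_comm, mul_assoc, mul_left_comm] }
  -- φ vanishes on the span of the monomial columns
  have hφS : Stmt9Aux.S n d ≤ LinearMap.ker φ := by
    rw [Stmt9Aux.S, Submodule.span_le]
    rintro f ⟨γ, rfl⟩
    have := congr_fun hmul γ
    simp only [Matrix.vecMul, dotProduct, powerProductMatrix, Matrix.of_apply,
      Pi.zero_apply] at this
    simpa [φ, Stmt9Aux.mono] using this
  -- apply φ to the Newton function for β
  have hmem : (fun α : Bnd n d =>
      ∏ k, ∏ j ∈ Finset.range ((β : Fin n → ℕ) k), (((α : Fin n → ℕ) k : ℝ) - j))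
      ∈ Stmt9Aux.S n d := by
    have := Stmt9Aux.eval_mem (n := n) hd (Stmt9Aux.newt n (β : Fin n → ℕ))
      (le_trans (Stmt9Aux.newt_totalDegree _) (le_of_eq (Stmt9Aux.sum_coord β)))
    convert this using 1
    funext α
    rw [Stmt9Aux.newt_eval]
  have hker := hφS hmem
  rw [LinearMap.mem_ker] at hker
  have hval : φ (fun α : Bnd n d =>
      ∏ k, ∏ j ∈ Finset.range ((β : Fin n → ℕ) k), (((α : Fin n → ℕ) k : ℝ) - j))
      = v β * ∏ k, (((β : Fin n → ℕ) k).factorial : ℝ) := by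
    show (∑ α, v α * _) = _
    rw [Finset.sum_congr rfl fun α _ => by rw [Stmt9Aux.newt_eval_eq α β]]
    simp [Finset.sum_ite_eq' Finset.univ β]
  rw [hval] at hker
  have hfac : (∏ k, (((β : Fin n → ℕ) k).factorial : ℝ)) ≠ 0 := by
    refine Finset.prod_ne_zero_iff.mpr fun k _ => ?_
    exact_mod_cast Nat.factorial_ne_zero _
  have : v β = 0 := by
    rcases mul_eq_zero.mp hker with h | h
    · exact h
    · exact absurd h hfac
  simpa using this
end

section
/- For all positive integers n and d, the matrix V̂(n,d) with entry at position (α,β) given by (d choose β) · Π_k α_k^{β_k} (multinomial coefficient d!/(β_1!···β_n!), convention 0^0=1), indexed by α, β ∈ B(n,d), is nonsingular; moreover det V̂(n,d) = (Π_{β ∈ B(n,d)} d!/(β_1!···β_n!)) · det V(n,d). -/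
/-- The matrix `V̂(n,d)` with entry `(d choose β) ∏ k, α k ^ β k`, where
`(d choose β) = d!/(β₁!⋯βₙ!)` is the multinomial coefficient. -/
noncomputable def powerProductMatrixHat (n d : ℕ) : Matrix (Bnd n d) (Bnd n d) ℝ :=
  Matrix.of fun α β =>
    (Nat.multinomial Finset.univ (β : Fin n → ℕ) : ℝ) *
      ∏ k, ((α : Fin n → ℕ) k : ℝ) ^ ((β : Fin n → ℕ) k)
/-! On `B(n,d)` the coordinates sum to `d`, so `x^β = d⁻¹ ∑ₖ xₖ x^β` there, and every monomial
of degree at most `d` restricted to `B(n,d)` lies in the column span of `V(n,d)`. For `α ∈ B(n,d)`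
the degree-`d` polynomial `∏ₖ xₖ(xₖ - 1)⋯(xₖ - αₖ + 1)` vanishes at every other point of `B(n,d)`
(such a point has some coordinate `γₖ < αₖ`) but not at `α`, so the columns span all functions on
`B(n,d)` and `V(n,d)` is invertible. Finally `V̂(n,d)` is `V(n,d)` times the diagonal matrix of
multinomial coefficients. -/
open Polynomial

section
variable {n d : ℕ}

lemma Bnd.sum_eq (α : Bnd n d) : ∑ k, (α : Fin n → ℕ) k = d :=
  Finset.Nat.mem_antidiagonalTuple.mp α.2

lemma Bnd.exists_lt_of_ne {α γ : Bnd n d} (h : γ ≠ α) :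
    ∃ k, (γ : Fin n → ℕ) k < (α : Fin n → ℕ) k := by
  by_contra! hle
  refine h (Subtype.ext (funext fun k => ?_))
  exact ((Finset.sum_eq_sum_iff_of_le fun k _ => hle k).mp
    (by rw [Bnd.sum_eq, Bnd.sum_eq]) k (Finset.mem_univ k)).symm

def monomialFun (β : Fin n → ℕ) : Bnd n d → ℝ :=
  fun α => ∏ k, ((α : Fin n → ℕ) k : ℝ) ^ β k

lemma monomialFun_add_single (β : Fin n → ℕ) (k : Fin n) (α : Bnd n d) :
    monomialFun (β + Pi.single k 1) α = (α : Fin n → ℕ) k * monomialFun β α := by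
  simp only [monomialFun, Pi.add_apply, pow_add, Finset.prod_mul_distrib, Pi.single_apply,
    pow_ite, pow_one, pow_zero, Finset.prod_ite_eq', Finset.mem_univ, if_true, mul_comm]

lemma sum_monomialFun_add_single (β : Fin n → ℕ) :
    ∑ k, monomialFun (d := d) (β + Pi.single k 1) = (d : ℝ) • monomialFun β := by
  funext α
  simp only [Finset.sum_apply, monomialFun_add_single, ← Finset.sum_mul, Pi.smul_apply,
    smul_eq_mul]
  rw [← Nat.cast_sum, Bnd.sum_eq]

lemma prod_descFactorial_eq (α γ : Bnd n d) :
    ∏ k, ((γ : Fin n → ℕ) k).descFactorial ((α : Fin n → ℕ) k)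
      = if γ = α then ∏ k, ((α : Fin n → ℕ) k).factorial else 0 := by
  split_ifs with h
  · simp [h, Nat.descFactorial_self]
  · obtain ⟨k, hk⟩ := Bnd.exists_lt_of_ne h
    exact Finset.prod_eq_zero (Finset.mem_univ k) (Nat.descFactorial_eq_zero_iff_lt.mpr hk)

lemma monomialFun_mem_span_col (β : Fin n → ℕ) (hβ : ∑ k, β k ≤ d) :
    monomialFun β ∈ Submodule.span ℝ (Set.range (powerProductMatrix n d).col) := by
  obtain ⟨m, hm⟩ := Nat.exists_eq_add_of_le hβ
  induction m generalizing β with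
  | zero => exact Submodule.subset_span ⟨⟨β, Finset.Nat.mem_antidiagonalTuple.mpr hm.symm⟩, rfl⟩
  | succ m ih =>
    have hd : (d : ℝ) ≠ 0 := by rw [hm]; positivity
    have hsum (k : Fin n) : ∑ j, (β + Pi.single k 1 : Fin n → ℕ) j = ∑ j, β j + 1 := by
      simp [Finset.sum_add_distrib]
    rw [← inv_smul_smul₀ hd (monomialFun β), ← sum_monomialFun_add_single]
    refine Submodule.smul_mem _ _ (Submodule.sum_mem _ fun k _ => ih _ ?_ ?_) <;> rw [hsum] <;> omega

lemma prod_eval_mem_span_col (p : Fin n → ℝ[X]) (hp : ∑ k, (p k).natDegree ≤ d) :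
    (fun γ : Bnd n d => ∏ k, (p k).eval ((γ : Fin n → ℕ) k : ℝ))
      ∈ Submodule.span ℝ (Set.range (powerProductMatrix n d).col) := by
  have hexp : (fun γ : Bnd n d => ∏ k, (p k).eval ((γ : Fin n → ℕ) k : ℝ)) =
      ∑ J ∈ Fintype.piFinset fun k => Finset.range ((p k).natDegree + 1),
        (∏ k, (p k).coeff (J k)) • monomialFun J := by
    funext γ
    simp only [eval_eq_sum_range, Finset.prod_univ_sum, Finset.sum_apply, Pi.smul_apply,
      smul_eq_mul, monomialFun, Finset.prod_mul_distrib]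
  rw [hexp]
  refine Submodule.sum_mem _ fun J hJ => Submodule.smul_mem _ _ (monomialFun_mem_span_col J ?_)
  refine (Finset.sum_le_sum fun k _ => ?_).trans hp
  exact Nat.lt_succ_iff.mp (Finset.mem_range.mp (Fintype.mem_piFinset.mp hJ k))

lemma span_col_powerProductMatrix_eq_top :
    Submodule.span ℝ (Set.range (powerProductMatrix n d).col) = ⊤ := by
  rw [eq_top_iff, ← (Pi.basisFun ℝ (Bnd n d)).span_eq, Submodule.span_le]
  rintro _ ⟨α, rfl⟩
  set c : ℝ := ∏ k, (((α : Fin n → ℕ) k).factorial : ℝ)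
  have hc : c ≠ 0 := by positivity
  have h : Pi.basisFun ℝ _ α
      = c⁻¹ • fun γ : Bnd n d => ∏ k, (descPochhammer ℝ ((α : Fin n → ℕ) k)).eval
          ((γ : Fin n → ℕ) k : ℝ) := by
    funext γ
    simp only [descPochhammer_eval_eq_descFactorial, ← Nat.cast_prod, prod_descFactorial_eq,
      Pi.basisFun_apply, Pi.single_apply, Pi.smul_apply, smul_eq_mul]
    split_ifs <;> simp [c, hc]
  rw [h]
  refine Submodule.smul_mem _ _ (prod_eval_mem_span_col _ ?_)
  simp [descPochhammer_natDegree, Bnd.sum_eq]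

lemma det_powerProductMatrix_ne_zero : (powerProductMatrix n d).det ≠ 0 := by
  have hsurj : Function.Surjective (powerProductMatrix n d).mulVec :=
    (LinearMap.range_eq_top (f := (powerProductMatrix n d).mulVecLin)).mp <| by
      rw [Matrix.range_mulVecLin, span_col_powerProductMatrix_eq_top]
  exact ((Matrix.isUnit_iff_isUnit_det _).mp (Matrix.mulVec_surjective_iff_isUnit.mp hsurj)).ne_zero

end

lemma powerProductMatrixHat_eq_mul_diagonal (n d : ℕ) :
    powerProductMatrixHat n d = powerProductMatrix n d *
      Matrix.diagonal fun β : Bnd n d => (Nat.multinomial Finset.univ (β : Fin n → ℕ) : ℝ) := by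
  ext α β
  simp [powerProductMatrixHat, powerProductMatrix, mul_comm]

theorem stmt10_general (n d : ℕ) :
    (powerProductMatrixHat n d).det ≠ 0
    ∧ (powerProductMatrixHat n d).det
      = (∏ β ∈ Finset.Nat.antidiagonalTuple n d, (Nat.multinomial Finset.univ β : ℝ)) *
          (powerProductMatrix n d).det := by
  have hdet : (powerProductMatrixHat n d).det
      = (∏ β ∈ Finset.Nat.antidiagonalTuple n d, (Nat.multinomial Finset.univ β : ℝ)) *
          (powerProductMatrix n d).det := by
    rw [powerProductMatrixHat_eq_mul_diagonal, Matrix.det_mul, Matrix.det_diagonal, mul_comm,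
      Finset.prod_coe_sort (Finset.Nat.antidiagonalTuple n d)
        fun β => (Nat.multinomial Finset.univ β : ℝ)]
  refine ⟨?_, hdet⟩
  rw [hdet]
  exact mul_ne_zero (Finset.prod_ne_zero_iff.mpr fun β _ =>
    Nat.cast_ne_zero.mpr (Nat.multinomial_pos _ _).ne') det_powerProductMatrix_ne_zero

theorem stmt10 (n d : ℕ) (hn : 0 < n) (hd : 0 < d) :
    (powerProductMatrixHat n d).det ≠ 0
    ∧ (powerProductMatrixHat n d).det
      = (∏ β ∈ Finset.Nat.antidiagonalTuple n d, (Nat.multinomial Finset.univ β : ℝ)) *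
          (powerProductMatrix n d).det :=
  stmt10_general n d
end

section
/- For fixed n, the sparsity spa(V(n,d)) = 1 − nnz(V(n,d))/C(n+d-1,d)² tends to 0 as d → ∞; for fixed d, it tends to 1 as n → ∞. -/
open Filter Finset

/-! A pair of exponent vectors `(p, q)` gives a nonzero entry `∏ pₖ ^ qₖ` exactly when `q`
vanishes wherever `p` does.

For fixed `d`, such a `q` is supported on the at most `d` coordinates where `p` is nonzero, so
each row has at most `C(2d-1, d)` nonzero entries, while there are `C(n+d-1, d) ≥ n` rows: the
density is `O(1/n)`.

For fixed `n`, a row `p` without zero coordinates is entirely nonzero, and the rows with a zero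
coordinate number at most `n · C(n+d-2, d)`, a fraction `n(n-1)/(n+d-1)` of all rows. -/

/-- Number of nonzero entries of the power-product matrix `V(n,d)`. -/
def nnzV (n d : ℕ) : ℕ :=
  ((Finset.Nat.antidiagonalTuple n d ×ˢ Finset.Nat.antidiagonalTuple n d).filter
    fun p => ∏ k, p.1 k ^ p.2 k ≠ 0).card

/-- Sparsity of `V(n,d)`: one minus the ratio of nonzero entries to the total
number of entries `C(n+d-1,d)²`. -/
noncomputable def spaV (n d : ℕ) : ℝ :=
  1 - (nnzV n d : ℝ) / ((n + d - 1).choose d : ℝ) ^ 2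

lemma Nat.add_sub_one_choose_mul (m d : ℕ) :
    (m + d - 1).choose d * (m + d) = (m + d).choose d * m := by
  rcases Nat.eq_zero_or_pos (m + d) with h | h
  · obtain ⟨rfl, rfl⟩ : m = 0 ∧ d = 0 := by omega
    rfl
  · have := Nat.choose_mul_succ_eq (m + d - 1) d
    rwa [Nat.sub_add_cancel h, Nat.add_sub_cancel] at this

namespace Finset

lemma card_piAntidiag_nat {ι : Type*} [DecidableEq ι] (s : Finset ι) (n : ℕ) :
    #(piAntidiag s n) = (#s + n - 1).choose n := by
  rw [← card_finsuppAntidiag_nat_eq_choose, finsuppAntidiag, card_map, card_attach]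

lemma card_filter_ne_zero_le_sum {ι : Type*} (s : Finset ι) (f : ι → ℕ) :
    #(s.filter (f · ≠ 0)) ≤ ∑ i ∈ s, f i := by
  rw [card_filter]
  exact sum_le_sum fun i _ => by split_ifs <;> omega

lemma prod_pow_ne_zero_iff {ι M : Type*} [CommMonoidWithZero M] [NoZeroDivisors M]
    [Nontrivial M] (s : Finset ι) (f : ι → M) (g : ι → ℕ) :
    ∏ i ∈ s, f i ^ g i ≠ 0 ↔ ∀ i ∈ s, f i = 0 → g i = 0 := by
  simp [prod_ne_zero_iff]

namespace Nat

lemma card_antidiagonalTuple (k n : ℕ) :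
    #(antidiagonalTuple k n) = (k + n - 1).choose n := by
  rw [← piAntidiag_univ_fin_eq_antidiagonalTuple, card_piAntidiag_nat, card_univ,
    Fintype.card_fin]

lemma le_card_antidiagonalTuple (k : ℕ) {n : ℕ} (hn : n ≠ 0) :
    k ≤ #(antidiagonalTuple k n) := by
  calc k = #(univ : Finset (Fin k)) := by simp
    _ ≤ _ := card_le_card_of_injOn (fun i => Pi.single i n)
        (fun i _ => by simp [mem_antidiagonalTuple]) fun i _ j _ hij => by
          by_contra hne
          simpa [Pi.single_apply, hne, hn] using congr_fun hij i

lemma card_filter_forall_eq_zero_imp_le {n d : ℕ} {p : Fin n → ℕ}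
    (hp : p ∈ antidiagonalTuple n d) :
    #((antidiagonalTuple n d).filter fun q => ∀ k, p k = 0 → q k = 0)
      ≤ (2 * d - 1).choose d := by
  have hsupp : #(univ.filter (p · ≠ 0)) ≤ d :=
    (card_filter_ne_zero_le_sum _ _).trans (mem_antidiagonalTuple.1 hp).le
  calc _ ≤ #(piAntidiag (univ.filter (p · ≠ 0)) d) := by
        refine card_le_card fun q hq => ?_
        rw [mem_filter, mem_antidiagonalTuple] at hq
        rw [mem_piAntidiag, sum_filter_of_ne (p := (p · ≠ 0)) fun k _ hk hpk => hk (hq.2 k hpk)]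
        exact ⟨hq.1, fun k hk => mem_filter.2 ⟨mem_univ k, mt (hq.2 k) hk⟩⟩
    _ = (#(univ.filter (p · ≠ 0)) + d - 1).choose d := card_piAntidiag_nat _ _
    _ ≤ (2 * d - 1).choose d := Nat.choose_le_choose _ (by omega)

lemma card_filter_exists_eq_zero_le (n d : ℕ) :
    #((antidiagonalTuple n d).filter fun p => ∃ k, p k = 0) ≤ n * (n - 1 + d - 1).choose d := by
  calc _ ≤ #(univ.biUnion fun k : Fin n => piAntidiag (univ.erase k) d) := by
        refine card_le_card fun p hp => ?_
        obtain ⟨hp, k, hk⟩ := mem_filter.1 hp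
        rw [mem_antidiagonalTuple] at hp
        refine mem_biUnion.2 ⟨k, mem_univ k, mem_piAntidiag.2 ⟨?_, fun i hi => ?_⟩⟩
        · rw [← hp, ← add_sum_erase _ _ (mem_univ k), hk, zero_add]
        · exact mem_erase.2 ⟨fun hik => hi (hik ▸ hk), mem_univ i⟩
    _ ≤ ∑ k : Fin n, #(piAntidiag (univ.erase k) d) := card_biUnion_le
    _ = n * (n - 1 + d - 1).choose d := by simp [card_piAntidiag_nat]

end Nat

end Finset

open Finset.Nat

lemma nnzV_eq_sum (n d : ℕ) :
    nnzV n d = ∑ p ∈ antidiagonalTuple n d,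
      #((antidiagonalTuple n d).filter fun q => ∀ k, p k = 0 → q k = 0) := by
  simp only [nnzV, card_filter, sum_product, prod_pow_ne_zero_iff, mem_univ, true_imp_iff]

lemma nnzV_le (n d : ℕ) :
    nnzV n d ≤ #(antidiagonalTuple n d) * (2 * d - 1).choose d := by
  rw [nnzV_eq_sum, ← smul_eq_mul, ← sum_const]
  exact sum_le_sum fun p hp => card_filter_forall_eq_zero_imp_le hp

lemma card_mul_le_nnzV (n d : ℕ) :
    #((antidiagonalTuple n d).filter fun p => ∀ k, p k ≠ 0) * #(antidiagonalTuple n d)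
      ≤ nnzV n d := by
  rw [nnzV_eq_sum, ← smul_eq_mul, ← sum_const, sum_filter]
  refine sum_le_sum fun p _ => ?_
  split_ifs with hp
  · rw [filter_true_of_mem fun q _ k hk => absurd hk (hp k)]
  · exact Nat.zero_le _

lemma spaV_eq (n d : ℕ) :
    spaV n d = 1 - (nnzV n d : ℝ) / (#(antidiagonalTuple n d) : ℝ) ^ 2 := by
  rw [spaV, card_antidiagonalTuple]

lemma spaV_nonneg (n d : ℕ) : 0 ≤ spaV n d := by
  have h : nnzV n d ≤ #(antidiagonalTuple n d) ^ 2 := by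
    rw [sq, ← card_product]
    exact card_filter_le _ _
  rw [spaV_eq, sub_nonneg]
  exact div_le_one_of_le₀ (by exact_mod_cast h) (by positivity)

lemma spaV_le_one (n d : ℕ) : spaV n d ≤ 1 :=
  sub_le_self _ (by positivity)

lemma spaV_le {n d : ℕ} (hn : 0 < n) (hd : 0 < d) :
    spaV n d ≤ n * (n - 1) / (n + d - 1) := by
  set T := antidiagonalTuple n d
  set P := #(T.filter fun p => ∀ k, p k ≠ 0)
  set Z := #(T.filter fun p => ∃ k, p k = 0)
  have hN : (0 : ℝ) < #T := by exact_mod_cast hn.trans_le (le_card_antidiagonalTuple n hd.ne')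
  have hPZ : (P : ℝ) + Z = #T := by
    have := card_filter_add_card_filter_not (s := T) fun p => ∀ k, p k ≠ 0
    push Not at this
    exact_mod_cast this
  have hZ : Z * (n + d - 1) ≤ n * (n - 1) * #T := by
    have hshift : n - 1 + d = n + d - 1 := by omega
    calc Z * (n + d - 1) ≤ n * (n - 1 + d - 1).choose d * (n + d - 1) :=
          Nat.mul_le_mul_right _ (card_filter_exists_eq_zero_le n d)
      _ = n * (n - 1) * #T := by
          rw [mul_assoc, ← hshift, Nat.add_sub_one_choose_mul, hshift, card_antidiagonalTuple]
          ring
  rify [hn, show 1 ≤ n + d by omega] at hZ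
  have hnd : (0 : ℝ) < n + d - 1 := by
    have : (1 : ℝ) ≤ n := by exact_mod_cast hn
    have : (1 : ℝ) ≤ d := by exact_mod_cast hd
    linarith
  calc spaV n d ≤ 1 - (P * #T : ℝ) / #T ^ 2 := by
        rw [spaV_eq]
        gcongr
        exact_mod_cast card_mul_le_nnzV n d
    _ = Z / #T := by
        field_simp
        linarith
    _ ≤ n * (n - 1) / (n + d - 1) := by
        rw [div_le_div_iff₀ hN hnd]
        linarith

lemma one_sub_spaV_le {n d : ℕ} (hn : 0 < n) (hd : 0 < d) :
    1 - spaV n d ≤ (2 * d - 1).choose d / n := by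
  set T := antidiagonalTuple n d
  have hnT : (n : ℝ) ≤ #T := by exact_mod_cast le_card_antidiagonalTuple n hd.ne'
  have hn' : (0 : ℝ) < n := by exact_mod_cast hn
  calc 1 - spaV n d = (nnzV n d : ℝ) / #T ^ 2 := by rw [spaV_eq, sub_sub_cancel]
    _ ≤ (#T * (2 * d - 1).choose d : ℝ) / #T ^ 2 := by
        gcongr
        exact_mod_cast nnzV_le n d
    _ = (2 * d - 1).choose d / #T := by
        field_simp
    _ ≤ (2 * d - 1).choose d / n := by gcongr

theorem stmt13 :
    (∀ n : ℕ, 0 < n → Tendsto (fun d => spaV n d) atTop (nhds 0))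
    ∧ (∀ d : ℕ, 0 < d → Tendsto (fun n => spaV n d) atTop (nhds 1)) := by
  refine ⟨fun n hn => ?_, fun d hd => ?_⟩
  · have hbound : Tendsto (fun d : ℕ => (n * (n - 1) / (n + d - 1) : ℝ)) atTop (nhds 0) :=
      tendsto_const_nhds.div_atTop <| tendsto_atTop_add_const_right _ _ <|
        tendsto_atTop_add_const_left _ _ tendsto_natCast_atTop_atTop
    exact tendsto_of_tendsto_of_tendsto_of_le_of_le' tendsto_const_nhds hbound
      (.of_forall fun d => spaV_nonneg n d)
      ((eventually_gt_atTop 0).mono fun d hd => spaV_le hn hd)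
  · have hbound :
        Tendsto (fun n : ℕ => 1 - ((2 * d - 1).choose d / n : ℝ)) atTop (nhds 1) := by
      simpa using tendsto_const_nhds.sub
        (tendsto_const_nhds.div_atTop (tendsto_natCast_atTop_atTop (R := ℝ)))
    exact tendsto_of_tendsto_of_tendsto_of_le_of_le' hbound tendsto_const_nhds
      ((eventually_gt_atTop 0).mono fun n hn => sub_le_comm.1 (one_sub_spaV_le hn hd))
      (.of_forall fun n => spaV_le_one n d)
end

section
/- For all positive integers n and d, every entry of the inverse matrix V(n,d)^{-1} at a position where V(n,d) has a zero entry is also zero; consequently nnz(V(n,d)^{-1}) ≤ nnz(V(n,d)) and spa(V(n,d)^{-1}) ≥ spa(V(n,d)). -/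
/-- Number of nonzero entries of a matrix. -/
noncomputable def nnzM {ι : Type*} [Fintype ι] (M : Matrix ι ι ℝ) : ℕ :=
  (Finset.univ.filter fun p : ι × ι => M p.1 p.2 ≠ 0).card

/-- Sparsity of a matrix. -/
noncomputable def spaM {ι : Type*} [Fintype ι] (M : Matrix ι ι ℝ) : ℝ :=
  1 - (nnzM M : ℝ) / ((Fintype.card ι : ℝ) ^ 2)


open Polynomial Matrix


section general
variable {ι : Type*} [Fintype ι] [DecidableEq ι]

/-- Zero-pattern predicate attached to a relation `r`. -/
def zpat (r : ι → ι → Prop) (M : Matrix ι ι ℝ) : Prop :=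
  ∀ i j, ¬ r i j → M i j = 0

lemma zpat_one {r : ι → ι → Prop} (hr : Reflexive r) : zpat r (1 : Matrix ι ι ℝ) := by
  intro i j h
  have : i ≠ j := by rintro rfl; exact h (hr i)
  simp [Matrix.one_apply, this]

lemma zpat_mul {r : ι → ι → Prop} (ht : Transitive r) {A B : Matrix ι ι ℝ}
    (hA : zpat r A) (hB : zpat r B) : zpat r (A * B) := by
  intro i j h
  rw [Matrix.mul_apply]
  refine Finset.sum_eq_zero fun k _ => ?_
  by_cases h1 : r i k
  · by_cases h2 : r k j
    · exact absurd (ht h1 h2) h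
    · rw [hB k j h2, mul_zero]
  · rw [hA i k h1, zero_mul]

lemma zpat_pow {r : ι → ι → Prop} (hr : Reflexive r) (ht : Transitive r) {A : Matrix ι ι ℝ}
    (hA : zpat r A) : ∀ m : ℕ, zpat r (A ^ m) := by
  intro m
  induction m with
  | zero => simpa using zpat_one hr
  | succ m ih => rw [pow_succ]; exact zpat_mul ht ih hA

lemma zpat_aeval {r : ι → ι → Prop} (hr : Reflexive r) (ht : Transitive r) {A : Matrix ι ι ℝ}
    (hA : zpat r A) (p : ℝ[X]) : zpat r (aeval A p) := by
  intro i j h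
  rw [Polynomial.aeval_eq_sum_range]
  simp only [Matrix.sum_apply, Matrix.smul_apply, smul_eq_mul]
  refine Finset.sum_eq_zero fun k _ => ?_
  rw [zpat_pow hr ht hA k i j h, mul_zero]

/-- inverse preserves the zero pattern of a reflexive transitive relation -/
lemma zpat_inv {r : ι → ι → Prop} (hr : Reflexive r) (ht : Transitive r) {A : Matrix ι ι ℝ}
    (hA : zpat r A) : zpat r A⁻¹ := by
  by_cases hdet : IsUnit A.det
  · have hc : A.charpoly.coeff 0 ≠ 0 := by
      intro h0
      rw [Matrix.det_eq_sign_charpoly_coeff, h0, mul_zero] at hdet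
      exact hdet.ne_zero rfl
    set c : ℝ := A.charpoly.coeff 0 with hc0
    have key : A * aeval A A.charpoly.divX + c • (1 : Matrix ι ι ℝ) = 0 := by
      have := Matrix.aeval_self_charpoly A
      calc A * aeval A A.charpoly.divX + c • 1
          = aeval A (X * A.charpoly.divX + C c) := by
            simp [map_add, _root_.map_mul, Polynomial.aeval_X, Polynomial.aeval_C,
              Algebra.algebraMap_eq_smul_one]
        _ = aeval A A.charpoly := by rw [Polynomial.X_mul_divX_add]
        _ = 0 := this
    have hinv : A * ((-c)⁻¹ • aeval A A.charpoly.divX) = 1 := by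
      rw [Matrix.mul_smul]
      have h1 : A * aeval A A.charpoly.divX = -(c • 1) := by
        rw [eq_neg_iff_add_eq_zero]; exact key
      rw [h1, ← smul_neg, smul_smul]
      have h2 : (-c)⁻¹ * c = -1 := by
        rw [inv_neg, neg_mul, inv_mul_cancel₀ hc]
      rw [h2, neg_smul, one_smul, neg_neg]
    rw [Matrix.inv_eq_right_inv hinv]
    intro i j h
    simp only [Matrix.smul_apply, smul_eq_mul]
    rw [zpat_aeval hr ht hA _ i j h, mul_zero]
  · rw [Matrix.nonsing_inv_apply_not_isUnit A hdet]
    intro i j _; rfl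

end general



/-- The support relation on `Bnd n d`. -/
def srel (n d : ℕ) (α β : Bnd n d) : Prop :=
  ∀ k, (β : Fin n → ℕ) k ≠ 0 → (α : Fin n → ℕ) k ≠ 0

lemma srel_refl (n d : ℕ) : Reflexive (srel n d) := fun _ _ h => h

lemma srel_trans (n d : ℕ) : Transitive (srel n d) :=
  fun _ _ _ h1 h2 k hk => h1 k (h2 k hk)

lemma ppm_eq_zero_iff (n d : ℕ) (α β : Bnd n d) :
    powerProductMatrix n d α β = 0 ↔ ¬ srel n d α β := by
  rw [powerProductMatrix, Matrix.of_apply, Finset.prod_eq_zero_iff]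
  constructor
  · rintro ⟨k, -, hk⟩ h
    rcases pow_eq_zero_iff'.mp hk with ⟨h0, hne⟩
    exact h k hne (by exact_mod_cast h0)
  · intro h
    rw [srel] at h
    push_neg at h
    obtain ⟨k, hk, h0⟩ := h
    exact ⟨k, Finset.mem_univ k, by rw [h0]; simp [pow_eq_zero_iff, hk]⟩

theorem stmt14 (n d : ℕ) (hn : 0 < n) (hd : 0 < d) :
    (∀ α β : Bnd n d, powerProductMatrix n d α β = 0 → (powerProductMatrix n d)⁻¹ α β = 0)
    ∧ nnzM (powerProductMatrix n d)⁻¹ ≤ nnzM (powerProductMatrix n d)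
    ∧ spaM (powerProductMatrix n d)⁻¹ ≥ spaM (powerProductMatrix n d) := by
  classical
  have hz : zpat (srel n d) (powerProductMatrix n d) := by
    intro i j h; exact (ppm_eq_zero_iff n d i j).mpr h
  have hzi : zpat (srel n d) (powerProductMatrix n d)⁻¹ :=
    zpat_inv (srel_refl n d) (srel_trans n d) hz
  have h1 : ∀ α β : Bnd n d, powerProductMatrix n d α β = 0 →
      (powerProductMatrix n d)⁻¹ α β = 0 := by
    intro α β h
    exact hzi α β ((ppm_eq_zero_iff n d α β).mp h)
  have h2 : nnzM (powerProductMatrix n d)⁻¹ ≤ nnzM (powerProductMatrix n d) := by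
    apply Finset.card_le_card
    intro p hp
    simp only [Finset.mem_filter, Finset.mem_univ, true_and] at hp ⊢
    intro h0
    exact hp (h1 p.1 p.2 h0)
  refine ⟨h1, h2, ?_⟩
  rw [spaM, spaM, ge_iff_le, sub_le_sub_iff_left]
  have hne : Nonempty (Bnd n d) := by
    refine ⟨⟨fun i => if i = ⟨0, hn⟩ then d else 0, ?_⟩⟩
    rw [Finset.Nat.mem_antidiagonalTuple]
    simp
  have hpos : (0 : ℝ) < (Fintype.card (Bnd n d) : ℝ) ^ 2 := by
    have := Fintype.card_pos_iff.mpr hne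
    positivity
  rw [div_le_div_iff_of_pos_right hpos]
  exact_mod_cast h2
end

section
/- For positive integers n and d, det V(n,d) = Π_{k=1}^{min(n,d)} (det W_k)^{C(n,k)}, where W_k is the power-product matrix generated by all compositions of d into k positive parts, i.e., the C(d-1,k-1) × C(d-1,k-1) matrix indexed by pairs (γ, δ) of compositions of d with k positive parts and entry Π_{i=1}^{k} γ_i^{δ_i}. -/
/-- Compositions of `d` into `k` positive parts. -/
abbrev PosComp (k d : ℕ) :=
  {γ : Fin k → ℕ // γ ∈ (Finset.Nat.antidiagonalTuple k d).filter fun a => ∀ i, 0 < a i}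

/-- The power-product matrix generated by all compositions of `d` into `k`
positive parts. -/
noncomputable def compPowerProductMatrix (k d : ℕ) : Matrix (PosComp k d) (PosComp k d) ℝ :=
  Matrix.of fun γ δ => ∏ i, ((γ : Fin k → ℕ) i : ℝ) ^ ((δ : Fin k → ℕ) i)

/-!
The entry `∏ i, α i ^ β i` of `V(n,d)` vanishes unless `supp β ⊆ supp α`. Grouping rows and columns
by their support and ordering the supports by reverse colex order (a linear extension of `⊇`) makes
`V(n,d)` block triangular, so its determinant is the product of the diagonal blocks. The block of a
support `S` is `W_{|S|}`: restricting a tuple with support `S` to `S`, enumerated increasingly, is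
a bijection onto the compositions of `d` into `|S|` positive parts, and it preserves the entries.
There are `C(n,k)` supports of size `k`, and the blocks with `k = 0` or `k > d` have
determinant `1`.
-/

open Finset Matrix OrderDual Function

instance {α : Type*} [Fintype α] : Fintype (Colex α) :=
  Fintype.ofEquiv α toColex

section OrderEmbOfFin

variable {ι M : Type*} [LinearOrder ι] {S : Finset ι}

@[to_additive]
lemma prod_comp_orderEmbOfFin [Fintype ι] [CommMonoid M] {f : ι → M} (hf : ∀ j ∉ S, f j = 1) :
    ∏ i, f (S.orderEmbOfFin rfl i) = ∏ j, f j :=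
  Fintype.prod_of_injective _ (S.orderEmbOfFin rfl).injective _ f
    (by simpa only [range_orderEmbOfFin, mem_coe]) fun _ => rfl

lemma extend_orderEmbOfFin_of_notMem [Zero M] (γ : Fin S.card → M) {j : ι} (hj : j ∉ S) :
    extend (S.orderEmbOfFin rfl) γ 0 j = 0 :=
  extend_apply' _ _ _ fun ⟨i, hi⟩ => hj (hi ▸ orderEmbOfFin_mem S rfl i)

lemma sum_extend_orderEmbOfFin [Fintype ι] [AddCommMonoid M] (γ : Fin S.card → M) :
    ∑ j, extend (S.orderEmbOfFin rfl) γ 0 j = ∑ i, γ i := by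
  rw [← sum_comp_orderEmbOfFin fun j => extend_orderEmbOfFin_of_notMem γ]
  simp only [(S.orderEmbOfFin rfl).injective.extend_apply]

end OrderEmbOfFin

lemma prod_powerset_apply_card {β M : Type*} [CommMonoid M] (f : ℕ → M) (x : Finset β) :
    ∏ t ∈ x.powerset, f #t = ∏ k ∈ range (#x + 1), f k ^ (#x).choose k := by
  rw [prod_powerset]
  refine prod_congr rfl fun k _ => ?_
  rw [prod_congr rfl fun t ht => congrArg f (mem_powersetCard.1 ht).2, prod_const,
    card_powersetCard]

section PowerProductMatrix

variable {n d : ℕ}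

def tupleSupport (α : Fin n → ℕ) : Finset (Fin n) :=
  {i | α i ≠ 0}

lemma mem_tupleSupport {α : Fin n → ℕ} {i : Fin n} : i ∈ tupleSupport α ↔ α i ≠ 0 := by
  simp [tupleSupport]

lemma eq_zero_of_notMem_tupleSupport {α : Fin n → ℕ} {i : Fin n} (h : i ∉ tupleSupport α) :
    α i = 0 :=
  not_not.1 (mt mem_tupleSupport.2 h)

def supportBlock (α : Bnd n d) : (Colex (Finset (Fin n)))ᵒᵈ :=
  toDual (toColex (tupleSupport α.1))

lemma supportBlock_eq_iff {α : Bnd n d} {S : Finset (Fin n)} :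
    supportBlock α = toDual (toColex S) ↔ tupleSupport α.1 = S :=
  toDual.injective.eq_iff.trans toColex.injective.eq_iff

lemma powerProductMatrix_eq_zero_of_not_subset {α β : Bnd n d}
    (h : ¬tupleSupport β.1 ⊆ tupleSupport α.1) : powerProductMatrix n d α β = 0 := by
  obtain ⟨i, hβ, hα⟩ := not_subset.1 h
  refine prod_eq_zero (mem_univ i) ?_
  rw [eq_zero_of_notMem_tupleSupport hα, Nat.cast_zero, zero_pow (mem_tupleSupport.1 hβ)]

lemma powerProductMatrix_blockTriangular :
    (powerProductMatrix n d).BlockTriangular supportBlock := fun _ _ hlt =>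
  powerProductMatrix_eq_zero_of_not_subset fun hsub =>
    hlt.not_ge (toDual_le_toDual.2 (Colex.toColex_le_toColex_of_subset hsub))

lemma tupleSupport_extend_orderEmbOfFin (S : Finset (Fin n)) {γ : Fin S.card → ℕ}
    (hγ : ∀ i, 0 < γ i) : tupleSupport (extend (S.orderEmbOfFin rfl) γ 0) = S := by
  ext j
  rw [mem_tupleSupport]
  by_cases hj : j ∈ S
  · obtain ⟨i, rfl⟩ : j ∈ Set.range (S.orderEmbOfFin rfl) := by
      rwa [range_orderEmbOfFin]
    simpa [(S.orderEmbOfFin rfl).injective.extend_apply] using (hγ i).ne'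
  · simp [extend_orderEmbOfFin_of_notMem γ hj, hj]

noncomputable def supportFiberEquiv (S : Finset (Fin n)) :
    {α : Bnd n d // tupleSupport α.1 = S} ≃ PosComp S.card d where
  toFun α := ⟨α.1.1 ∘ S.orderEmbOfFin rfl, by
    obtain ⟨⟨α, hα⟩, rfl⟩ := α
    refine mem_filter.2 ⟨?_, fun i => Nat.pos_of_ne_zero ?_⟩
    · rw [Nat.mem_antidiagonalTuple] at hα ⊢
      rw [comp_def, sum_comp_orderEmbOfFin fun j => eq_zero_of_notMem_tupleSupport, hα]
    · exact (mem_tupleSupport.1 (orderEmbOfFin_mem _ rfl i) :)⟩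
  invFun γ :=
    have hγ := mem_filter.1 γ.2
    ⟨⟨extend (S.orderEmbOfFin rfl) γ.1 0, by
      rw [Nat.mem_antidiagonalTuple, sum_extend_orderEmbOfFin]
      exact Nat.mem_antidiagonalTuple.1 hγ.1⟩,
      tupleSupport_extend_orderEmbOfFin S hγ.2⟩
  left_inv := by
    rintro ⟨⟨α, hα⟩, rfl⟩
    ext j
    by_cases hj : j ∈ tupleSupport α
    · obtain ⟨i, rfl⟩ : j ∈ Set.range ((tupleSupport α).orderEmbOfFin rfl) := by
        rwa [range_orderEmbOfFin]
      simp [(orderEmbOfFin _ rfl).injective.extend_apply]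
    · simp [extend_orderEmbOfFin_of_notMem _ hj, eq_zero_of_notMem_tupleSupport hj]
  right_inv γ := Subtype.ext (extend_comp (S.orderEmbOfFin rfl).injective _ _)

lemma det_toSquareBlock_powerProductMatrix (S : Finset (Fin n)) :
    ((powerProductMatrix n d).toSquareBlock supportBlock (toDual (toColex S))).det
      = (compPowerProductMatrix S.card d).det := by
  let e := (Equiv.subtypeEquivRight fun (α : Bnd n d) => supportBlock_eq_iff).trans
    (supportFiberEquiv S)
  rw [← det_submatrix_equiv_self e]
  congr 1
  ext α β
  have hβ : tupleSupport β.1.1 = S := supportBlock_eq_iff.1 β.2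
  refine (prod_comp_orderEmbOfFin (S := S) (f := fun j => (α.1.1 j : ℝ) ^ β.1.1 j)
    fun j hj => ?_).symm
  rw [← hβ] at hj
  rw [eq_zero_of_notMem_tupleSupport hj, pow_zero]

lemma det_powerProductMatrix_eq_prod_finset :
    (powerProductMatrix n d).det = ∏ S : Finset (Fin n), (compPowerProductMatrix S.card d).det := by
  rw [powerProductMatrix_blockTriangular.det_fintype, ← (toColex.trans toDual).prod_comp]
  exact prod_congr rfl fun S _ => det_toSquareBlock_powerProductMatrix S

lemma compPowerProductMatrix_zero (d : ℕ) : compPowerProductMatrix 0 d = 1 := by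
  ext γ δ
  rw [Subsingleton.elim γ δ]
  simp [compPowerProductMatrix]

lemma isEmpty_posComp_of_lt {k : ℕ} (h : d < k) : IsEmpty (PosComp k d) := by
  refine ⟨fun ⟨γ, hγ⟩ => h.not_ge ?_⟩
  obtain ⟨hsum, hpos⟩ := mem_filter.1 hγ
  calc k = ∑ _i : Fin k, 1 := by simp
    _ ≤ ∑ i, γ i := sum_le_sum fun i _ => hpos i
    _ = d := Nat.mem_antidiagonalTuple.1 hsum

lemma det_compPowerProductMatrix_eq_one {k : ℕ} (h : k = 0 ∨ d < k) :
    (compPowerProductMatrix k d).det = 1 := by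
  rcases h with rfl | h
  · rw [compPowerProductMatrix_zero, det_one]
  · have := isEmpty_posComp_of_lt h
    exact det_isEmpty

end PowerProductMatrix

theorem stmt15_general (n d : ℕ) :
    (powerProductMatrix n d).det
      = ∏ k ∈ Finset.Icc 1 (min n d), (compPowerProductMatrix k d).det ^ n.choose k := by
  rw [det_powerProductMatrix_eq_prod_finset, ← powerset_univ,
    prod_powerset_apply_card (fun k => (compPowerProductMatrix k d).det), card_univ,
    Fintype.card_fin]
  refine (prod_subset (fun k hk => ?_) fun k hk hk' => ?_).symm
  · simp only [mem_Icc, mem_range] at hk ⊢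
    omega
  · simp only [mem_Icc, mem_range, not_and_or, not_le] at hk hk'
    rw [det_compPowerProductMatrix_eq_one (by omega), one_pow]

theorem stmt15 (n d : ℕ) (hn : 0 < n) (hd : 0 < d) :
    (powerProductMatrix n d).det
      = ∏ k ∈ Finset.Icc 1 (min n d), (compPowerProductMatrix k d).det ^ n.choose k :=
  stmt15_general n d
end

section
/- Let k ≥ 0 and let a, b be real numbers (or integers). The (k+1)×(k+1) matrix A_k(a,b) with (i,j) entry (a−i+1)^{k−j+1} (b+i−1)^{j−1} for 1 ≤ i,j ≤ k+1 (convention 0^0 = 1) has determinant (a+b)^{k(k+1)/2} · Π_{h=1}^{k} h!. -/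
/-!
`A_k(a, b)` is the projective Vandermonde matrix of the points `(b + i : a - i)`, so its determinant
is `∏_{i<j} ((b + j)(a - i) - (b + i)(a - j)) = ∏_{i<j} (j - i)(a + b)`. There are `k(k+1)/2` pairs
`i < j`, and `∏_{i<j} (j - i)` is the Vandermonde determinant of `0, …, k`, the superfactorial of `k`.
-/

open Finset Matrix

theorem Fin.sum_card_Ioi (n : ℕ) : ∑ i : Fin n, #(Ioi i) = n * (n - 1) / 2 := by
  simp_rw [Fin.card_Ioi]
  rw [Fin.sum_univ_eq_sum_range (fun i => n - 1 - i), sum_range_reflect (fun i => i) n, sum_range_id]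

theorem Matrix.det_of_sub_pow_mul_add_pow {R : Type*} [CommRing R] (k : ℕ) (a b : R) :
    (of fun i j : Fin (k + 1) => (a - (i : ℕ)) ^ (k - (j : ℕ)) * (b + (i : ℕ)) ^ (j : ℕ)).det
      = (a + b) ^ (k * (k + 1) / 2) * (Nat.superFactorial k : R) := by
  have hproj : (of fun i j : Fin (k + 1) => (a - (i : ℕ)) ^ (k - (j : ℕ)) * (b + (i : ℕ)) ^ (j : ℕ))
      = projVandermonde (fun i => b + (i : ℕ)) (fun i => a - (i : ℕ)) := by
    ext i j
    rw [projVandermonde_apply, Fin.val_rev, of_apply, mul_comm]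
    congr 2
    omega
  have hfactor : ∀ i j : Fin (k + 1),
      (b + (j : ℕ)) * (a - (i : ℕ)) - (b + (i : ℕ)) * (a - (j : ℕ)) = (a + b) * ((j : R) - i) :=
    fun _ _ => by ring
  rw [hproj, det_projVandermonde]
  simp_rw [hfactor, prod_mul_distrib, prod_const, prod_pow_eq_pow_sum, Fin.sum_card_Ioi,
    ← det_vandermonde, det_vandermonde_id_eq_superFactorial]
  rw [add_tsub_cancel_right, mul_comm (k + 1)]

theorem stmt16 (k : ℕ) (a b : ℝ) :
    (Matrix.of fun i j : Fin (k + 1) =>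
        (a - (i : ℕ)) ^ (k - (j : ℕ)) * (b + (i : ℕ)) ^ (j : ℕ)).det
    = (a + b) ^ (k * (k + 1) / 2) * ∏ h ∈ Finset.Icc 1 k, (h.factorial : ℝ) := by
  rw [det_of_sub_pow_mul_add_pow, ← Nat.prod_Icc_factorial, Nat.cast_prod]
end

section
/- For every positive integer d, the determinant of the power-product matrix V(2,d) equals d^{d(d+1)/2} · Π_{h=1}^{d} h!. -/
/-! `V(2,d)` is the projective Vandermonde matrix of `v i = i`, `w i = d - i`, whose determinant is
`∏_{i<j} (v j w i - v i w j)`. Because `v i + w i = d` for every `i`, each factor is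
`d (j - i)`, so the determinant is `d ^ (number of pairs)` times the ordinary Vandermonde
determinant of `0, 1, …, d`, which is the superfactorial `∏_{h ≤ d} h!`. -/

open Finset Matrix

theorem Matrix.det_projVandermonde_of_add_eq {R : Type*} [CommRing R] {n : ℕ}
    (v w : Fin n → R) (c : R) (h : ∀ i, v i + w i = c) :
    (projVandermonde v w).det = c ^ (n * (n - 1) / 2) * (vandermonde v).det := by
  have factor (i j : Fin n) : v j * w i - v i * w j = c * (v j - v i) := by
    linear_combination v j * h i - v i * h j
  simp only [det_projVandermonde, det_vandermonde, factor, prod_mul_distrib, prod_const,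
    prod_pow_eq_pow_sum, Fin.sum_card_Ioi]

theorem stmt17_general (d : ℕ) :
    (Matrix.of fun i j : Fin (d + 1) =>
        ((i : ℕ) : ℝ) ^ (j : ℕ) * ((d - (i : ℕ) : ℕ) : ℝ) ^ (d - (j : ℕ))).det
    = (d : ℝ) ^ (d * (d + 1) / 2) * ∏ h ∈ Finset.Icc 1 d, (h.factorial : ℝ) := by
  have hproj : (Matrix.of fun i j : Fin (d + 1) =>
        ((i : ℕ) : ℝ) ^ (j : ℕ) * ((d - (i : ℕ) : ℕ) : ℝ) ^ (d - (j : ℕ)))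
      = projVandermonde (fun i => ((i : ℕ) : ℝ)) (fun i => ((d - (i : ℕ) : ℕ) : ℝ)) := by
    ext i j
    simp [projVandermonde_apply, Fin.val_rev]
  have hsum (i : Fin (d + 1)) : ((i : ℕ) : ℝ) + ((d - (i : ℕ) : ℕ) : ℝ) = d := by
    rw [Nat.cast_sub (Fin.is_le i), add_sub_cancel]
  rw [hproj, det_projVandermonde_of_add_eq _ _ _ hsum, det_vandermonde_id_eq_superFactorial,
    ← Nat.prod_Icc_factorial, Nat.add_sub_cancel, Nat.mul_comm]
  norm_cast

theorem stmt17 (d : ℕ) (hd : 0 < d) :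
    (Matrix.of fun i j : Fin (d + 1) =>
        ((i : ℕ) : ℝ) ^ (j : ℕ) * ((d - (i : ℕ) : ℕ) : ℝ) ^ (d - (j : ℕ))).det
    = (d : ℝ) ^ (d * (d + 1) / 2) * ∏ h ∈ Finset.Icc 1 d, (h.factorial : ℝ) :=
  stmt17_general d
end
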